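/- arXiv:0810.3277 — 7 statements merged into one kernel-verified Lean document; each statement's English description precedes it below -/
import Mathlib

section
/- (Theorem 2) Let Σ be a Lebesgue measurable subset of {x ∈ ℝ : w(x) > 0}. Suppose that for Lebesgue-a.e. x₀ ∈ Σ, condition (3) holds at x₀ and lim_{n→∞} (1/(n+1)) K_n(x₀, x₀) exists, is strictly positive, and is finite. Then for Lebesgue-a.e. x₀ ∈ Σ, the Lubinsky wiggle condition holds: K_n(x₀ + a/n, x₀ + a/n)/K_n(x₀, x₀) → 1 as n → ∞, uniformly for a ∈ [−A, A], for every A < ∞. -/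
open MeasureTheory Filter Set

/-- The Christoffel–Darboux kernel `K_n(x, y) = Σ_{j=0}^n p_j(x) p_j(y)` (for real arguments,
the orthonormal polynomials being real). -/
noncomputable def CDKernel (p : ℕ → Polynomial ℝ) (n : ℕ) (x y : ℝ) : ℝ :=
  ∑ j ∈ Finset.range (n + 1), (p j).eval x * (p j).eval y

/-- The (topological) support of a measure on `ℝ`: points all of whose neighborhoods have
positive measure. -/
def measSupport (μ : Measure ℝ) : Set ℝ := {x : ℝ | ∀ U ∈ nhds x, μ U ≠ 0}

/-!
Put `g_n(x) = K_n(x, x) / (n + 1)`. On the real line `K_n(x, x)` is the restriction of the entire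
function `Σ_j p_j(z)²`, and condition (3) bounds it by `O(n)` on complex discs of radius `O(1/n)`
about `x₀`; Cauchy's estimate therefore makes `g_n` Lipschitz with constant `O(n)` on every window
`|x - x₀| ≤ R / n`. By Egorov's theorem, up to a null set every point where `g_n` converges lies
in a set `E` on which `g_n` converges uniformly and the limit is within `ε` of its value at `x₀`.
At a Lebesgue density point `x₀` of `E`, each `x₀ + a / n` with `|a| ≤ A` is within `δ / n` of
some `y ∈ E`, so `g_n(x₀ + a / n)` is within `O(δ)` of `g_n(y)`, hence close to `lim g_n(x₀)`,
uniformly in `a`. Dividing by `g_n(x₀)` gives the wiggle condition.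
-/

open Metric Topology Polynomial

theorem tendstoUniformlyOn_const_iff {ι α β : Type*} [UniformSpace β] {F : ι → α → β} {c : β}
    {l : Filter ι} {s : Set α} :
    TendstoUniformlyOn F (fun _ => c) l s ↔
      Tendsto (fun q : ι × α => F q.1 q.2) (l ×ˢ 𝓟 s) (𝓝 c) := by
  rw [tendstoUniformlyOn_iff_tendsto, Uniform.tendsto_nhds_right]

theorem TendstoUniformlyOn.div_tendsto_self {ι α 𝕜 : Type*} [NormedField 𝕜] {F : ι → α → 𝕜}
    {b : ι → 𝕜} {c : 𝕜} {l : Filter ι} {s : Set α}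
    (hF : TendstoUniformlyOn F (fun _ => c) l s) (hb : Tendsto b l (𝓝 c)) (hc : c ≠ 0) :
    TendstoUniformlyOn (fun n a => F n a / b n) (fun _ => 1) l s := by
  rw [tendstoUniformlyOn_const_iff] at hF ⊢
  rw [← div_self hc]
  exact hF.div (hb.comp tendsto_fst) hc

theorem Differentiable.norm_sub_le_of_norm_le_on_closedBall {E : Type*} [NormedAddCommGroup E]
    [NormedSpace ℂ E] {f : ℂ → E} (hf : Differentiable ℂ f) {c : ℂ} {r ρ M : ℝ} (hρ : 0 < ρ)
    (hM : ∀ z ∈ closedBall c (r + ρ), ‖f z‖ ≤ M) {u v : ℂ} (hu : u ∈ closedBall c r)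
    (hv : v ∈ closedBall c r) :
    ‖f u - f v‖ ≤ M / ρ * ‖u - v‖ := by
  refine (convex_closedBall c r).norm_image_sub_le_of_norm_deriv_le (fun z _ => hf z)
    (fun z hz => ?_) hv hu
  refine Complex.norm_deriv_le_of_forall_mem_sphere_norm_le hρ hf.diffContOnCl fun w hw => hM w ?_
  rw [mem_closedBall] at hz ⊢
  rw [mem_sphere] at hw
  linarith [dist_triangle w z c]

theorem volume_inter_closedBall_div_le {E : Set ℝ} {x₀ x ρ r : ℝ} (hr : 0 < r)
    (hx : |x - x₀| + r ≤ ρ) (hE : Disjoint E (ball x r)) :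
    volume (E ∩ closedBall x₀ ρ) / volume (closedBall x₀ ρ) ≤ ENNReal.ofReal (1 - r / ρ) := by
  have hρ : 0 < ρ := by linarith [abs_nonneg (x - x₀)]
  have hsub : ball x r ⊆ closedBall x₀ ρ := fun y hy => by
    rw [mem_ball, Real.dist_eq] at hy
    rw [mem_closedBall, Real.dist_eq]
    linarith [abs_sub_le y x x₀]
  have hle : volume (E ∩ closedBall x₀ ρ) ≤ ENNReal.ofReal (2 * ρ - 2 * r) := calc
    volume (E ∩ closedBall x₀ ρ) ≤ volume (closedBall x₀ ρ \ ball x r) :=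
      measure_mono fun y hy => ⟨hy.2, hE.notMem_of_mem_left hy.1⟩
    _ = ENNReal.ofReal (2 * ρ - 2 * r) := by
      rw [measure_sdiff hsub measurableSet_ball.nullMeasurableSet measure_ball_lt_top.ne,
        Real.volume_closedBall, Real.volume_ball, ENNReal.ofReal_sub _ (by positivity)]
  rw [Real.volume_closedBall, ENNReal.div_le_iff (by simpa using hρ) ENNReal.ofReal_ne_top,
    ← ENNReal.ofReal_mul (by rw [sub_nonneg, div_le_one hρ]; linarith [abs_nonneg (x - x₀)])]
  convert hle using 2
  field_simp

theorem eventually_exists_mem_near_of_density {E : Set ℝ} {x₀ : ℝ}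
    (hE : Tendsto (fun ρ => volume (E ∩ closedBall x₀ ρ) / volume (closedBall x₀ ρ)) (𝓝[>] 0)
      (𝓝 1)) {A δ : ℝ} (hA : 0 ≤ A) (hδ : 0 < δ) :
    ∀ᶠ h in 𝓝[>] 0, ∀ x, |x - x₀| ≤ A * h → ∃ y ∈ E, |y - x| < δ * h := by
  -- A ball of radius `δ h` missing `E` inside `closedBall x₀ ((A + δ) h)` caps the density of `E`
  -- there at `1 - δ / (A + δ)`.
  have hθ : ENNReal.ofReal (1 - δ / (A + δ)) < 1 := by
    rw [ENNReal.ofReal_lt_one]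
    have : 0 < δ / (A + δ) := by positivity
    linarith
  have hscale : Tendsto (fun h : ℝ => (A + δ) * h) (𝓝[>] 0) (𝓝[>] 0) :=
    tendsto_nhdsWithin_iff.2 ⟨by simpa using
      ((continuous_const_mul (A + δ)).tendsto 0).mono_left nhdsWithin_le_nhds,
      eventually_nhdsWithin_of_forall fun h (hh : 0 < h) => mul_pos (by positivity) hh⟩
  filter_upwards [self_mem_nhdsWithin, hscale.eventually (hE.eventually (eventually_gt_nhds hθ))]
    with h hh hdense x hx
  by_contra! hfar
  have hh : 0 < h := hh
  refine hdense.not_ge ((volume_inter_closedBall_div_le (r := δ * h) (x := x) (by positivity)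
    (by linarith) ?_).trans_eq ?_)
  · exact disjoint_left.2 fun y hy hyx =>
      (hfar y hy).not_gt (by rwa [mem_ball, Real.dist_eq] at hyx)
  · congr 2
    field_simp

def ScaledLipschitzAt (g : ℕ → ℝ → ℝ) (x₀ : ℝ) : Prop :=
  ∀ R : ℝ, ∃ L : ℝ, ∀ᶠ n : ℕ in atTop, ∀ u v : ℝ, |u - x₀| ≤ R / n → |v - x₀| ≤ R / n →
    |g n u - g n v| ≤ L * n * |u - v|

theorem tendstoUniformlyOn_comp_add_div_of_density {g : ℕ → ℝ → ℝ} {x₀ c : ℝ}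
    (hlip : ScaledLipschitzAt g x₀)
    (hdens : ∀ ε > 0, ∃ E : Set ℝ,
      Tendsto (fun ρ => volume (E ∩ closedBall x₀ ρ) / volume (closedBall x₀ ρ)) (𝓝[>] 0)
        (𝓝 1) ∧ ∀ᶠ n in atTop, ∀ y ∈ E, |g n y - c| < ε)
    (A : ℝ) :
    TendstoUniformlyOn (fun n a => g n (x₀ + a / n)) (fun _ => c) atTop (Icc (-A) A) := by
  rw [Metric.tendstoUniformlyOn_iff]
  intro ε hε
  obtain ⟨L, hL⟩ := hlip (|A| + 1)
  set δ := min 1 (ε / (2 * (|L| + 1)))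
  have hδ : 0 < δ := by positivity
  have hLδ : |L| * δ < ε / 2 := calc
    |L| * δ ≤ |L| * (ε / (2 * (|L| + 1))) := by gcongr; exact min_le_right _ _
    _ < ε / 2 := by
      rw [mul_div_assoc', div_lt_div_iff₀ (by positivity) (by positivity)]
      nlinarith
  obtain ⟨E, hEdens, hEc⟩ := hdens (ε / 2) (by positivity)
  have hnear : ∀ᶠ n : ℕ in atTop, ∀ x, |x - x₀| ≤ |A| * (n : ℝ)⁻¹ →
      ∃ y ∈ E, |y - x| < δ * (n : ℝ)⁻¹ :=
    (tendsto_inv_atTop_nhdsGT_zero.comp tendsto_natCast_atTop_atTop).eventually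
      (eventually_exists_mem_near_of_density hEdens (abs_nonneg A) hδ)
  filter_upwards [hL, hEc, hnear, eventually_gt_atTop 0] with n hLn hEn hnear hn a ha
  have hn : (0 : ℝ) < n := by exact_mod_cast hn
  set x := x₀ + a / n
  have hxa : |x - x₀| ≤ |A| * (n : ℝ)⁻¹ := by
    rw [add_sub_cancel_left, abs_div, Nat.abs_cast, div_eq_mul_inv]
    exact mul_le_mul_of_nonneg_right (abs_le_abs ha.2 (by linarith [ha.1])) (by positivity)
  obtain ⟨y, hyE, hy⟩ := hnear x hxa
  have hδ1 : δ ≤ 1 := min_le_left _ _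
  have hwin : ∀ z, |z - x₀| ≤ (|A| + δ) * (n : ℝ)⁻¹ → |z - x₀| ≤ (|A| + 1) / n := fun z hz =>
    hz.trans (by rw [div_eq_mul_inv]; gcongr)
  have hyx₀ : |y - x₀| ≤ (|A| + δ) * (n : ℝ)⁻¹ := by linarith [abs_sub_le y x x₀]
  have hxy := hLn x y (hwin x (hxa.trans (by gcongr; linarith))) (hwin y hyx₀)
  rw [Real.dist_eq, abs_sub_comm]
  calc |g n x - c| ≤ |g n x - g n y| + |g n y - c| := abs_sub_le _ _ _
    _ < |L| * n * (δ * (n : ℝ)⁻¹) + ε / 2 := by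
      refine add_lt_add_of_le_of_lt (hxy.trans ?_) (hEn y hyE)
      rw [abs_sub_comm]
      gcongr
      exact le_abs_self L
    _ = |L| * δ + ε / 2 := by field_simp
    _ < ε := by linarith

theorem exists_tendstoUniformlyOn_ae_cover {α β : Type*} [MeasurableSpace α] [MetricSpace β]
    {μ : Measure α} [SigmaFinite μ] {f : ℕ → α → β} {g : α → β} {s : Set α}
    (hf : ∀ n, StronglyMeasurable (f n)) (hg : StronglyMeasurable g) (hs : MeasurableSet s)
    (hfg : ∀ᵐ x ∂μ, x ∈ s → Tendsto (f · x) atTop (𝓝 (g x))) :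
    ∃ t : ℕ × ℕ → Set α, (∀ i, MeasurableSet (t i)) ∧
      (∀ i, TendstoUniformlyOn f g atTop (t i)) ∧ ∀ᵐ x ∂μ, x ∈ s → ∃ i, x ∈ t i := by
  have hpiece (M : ℕ) : MeasurableSet (s ∩ spanningSets μ M) :=
    hs.inter (measurableSet_spanningSets μ M)
  have hegorov (i : ℕ × ℕ) := tendstoUniformlyOn_of_ae_tendsto hf hg (hpiece i.1)
    (measure_inter_lt_top_of_right_ne_top (measure_spanningSets_lt_top μ i.1).ne).ne
    (hfg.mono fun x hx hxs => hx hxs.1) (Nat.one_div_pos_of_nat (n := i.2))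
  choose u _ hu hμu hunif using hegorov
  refine ⟨fun i => (s ∩ spanningSets μ i.1) \ u i, fun i => (hpiece i.1).diff (hu i), hunif, ?_⟩
  have hnull (M : ℕ) : μ (⋂ m, u (M, m)) = 0 := by
    have hlim : Tendsto (fun m : ℕ => ENNReal.ofReal (1 / (m + 1))) atTop (𝓝 0) := by
      simpa using ENNReal.tendsto_ofReal tendsto_one_div_add_atTop_nhds_zero_nat
    exact le_antisymm (ge_of_tendsto' hlim fun m => (measure_mono (iInter_subset _ m)).trans
      (hμu (M, m))) zero_le
  refine ae_iff.2 (measure_mono_null (fun x hx => ?_) (measure_iUnion_null hnull))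
  simp only [mem_ofPred_eq, Classical.not_imp, not_exists] at hx
  exact mem_iUnion.2 ⟨spanningSetsIndex μ x, mem_iInter.2 fun m => by
    by_contra hxu
    exact hx.2 (_, m) ⟨⟨hx.1, mem_spanningSetsIndex μ x⟩, hxu⟩⟩

theorem ae_tendstoUniformlyOn_comp_add_div {g : ℕ → ℝ → ℝ} (hg : ∀ n, Measurable (g n)) :
    ∀ᵐ x₀, ∀ c, Tendsto (g · x₀) atTop (𝓝 c) → ScaledLipschitzAt g x₀ → ∀ A,
      TendstoUniformlyOn (fun n a => g n (x₀ + a / n)) (fun _ => c) atTop (Icc (-A) A) := by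
  have hg' (n : ℕ) : StronglyMeasurable (g n) := (hg n).stronglyMeasurable
  set k : ℝ → ℝ := fun x => limUnder atTop (g · x)
  have hk : StronglyMeasurable k := StronglyMeasurable.limUnder hg'
  obtain ⟨t, ht, hunif, hcover⟩ := exists_tendstoUniformlyOn_ae_cover (μ := volume) hg' hk
    (StronglyMeasurable.measurableSet_exists_tendsto (l := atTop) hg')
    (.of_forall fun _ ⟨_, hc⟩ => tendsto_nhds_limUnder ⟨_, hc⟩)
  have hdens : ∀ᵐ x, ∀ i (q r : ℚ), x ∈ t i ∩ k ⁻¹' Ioo (q : ℝ) r →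
      Tendsto (fun ρ => volume (t i ∩ k ⁻¹' Ioo (q : ℝ) r ∩ closedBall x ρ) /
        volume (closedBall x ρ)) (𝓝[>] 0) (𝓝 1) := by
    simp only [ae_all_iff]
    intro i q r
    filter_upwards [Besicovitch.ae_tendsto_measure_inter_div_of_measurableSet volume
      ((ht i).inter (hk.measurable measurableSet_Ioo))] with x hx hxt
    rwa [indicator_of_mem hxt] at hx
  filter_upwards [hcover, hdens] with x₀ hcover hdens c hc hlip A
  obtain ⟨i, hi⟩ := hcover ⟨c, hc⟩
  have hkc : k x₀ = c := hc.limUnder_eq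
  refine tendstoUniformlyOn_comp_add_div_of_density hlip (fun ε hε => ?_) A
  obtain ⟨q, hq, hqc⟩ := exists_rat_btwn (show c - ε / 2 < c by linarith)
  obtain ⟨r, hcr, hr⟩ := exists_rat_btwn (show c < c + ε / 2 by linarith)
  refine ⟨_, hdens i q r ⟨hi, by simpa [hkc] using ⟨hqc, hcr⟩⟩, ?_⟩
  filter_upwards [Metric.tendstoUniformlyOn_iff.1 (hunif i) (ε / 2) (by positivity)]
    with n hn y ⟨hyt, hyk⟩
  have hyk : |k y - c| < ε / 2 := abs_sub_lt_iff.2 ⟨by linarith [hyk.2], by linarith [hyk.1]⟩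
  calc |g n y - c| ≤ dist (k y) (g n y) + |k y - c| := by
        rw [Real.dist_eq, abs_sub_comm (k y)]; exact abs_sub_le _ _ _
    _ < ε := by linarith [hn y hyt]

theorem abs_cdKernel_sub_le (p : ℕ → ℝ[X]) (n : ℕ) {x₀ r ρ M : ℝ} (hρ : 0 < ρ)
    (hM : ∀ z ∈ closedBall (x₀ : ℂ) (r + ρ),
      ∑ j ∈ Finset.range (n + 1), ‖aeval z (p j)‖ ^ 2 ≤ M)
    {u v : ℝ} (hu : |u - x₀| ≤ r) (hv : |v - x₀| ≤ r) :
    |CDKernel p n u u - CDKernel p n v v| ≤ M / ρ * |u - v| := by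
  set f : ℂ → ℂ := fun z => ∑ j ∈ Finset.range (n + 1), aeval z (p j) ^ 2
  have hf : Differentiable ℂ f :=
    Differentiable.fun_sum fun j _ => (Polynomial.differentiable_aeval (p j)).pow 2
  have hfK (x : ℝ) : f x = CDKernel p n x x := by
    have (j : ℕ) : aeval (x : ℂ) (p j) = (p j).eval x :=
      aeval_algebraMap_apply_eq_algebraMap_eval x (p j)
    simp [f, CDKernel, this, sq]
  have hball (x : ℝ) (hx : |x - x₀| ≤ r) : (x : ℂ) ∈ closedBall (x₀ : ℂ) r := by
    rwa [mem_closedBall, dist_eq_norm, ← Complex.ofReal_sub, Complex.norm_real, Real.norm_eq_abs]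
  have hfM : ∀ z ∈ closedBall (x₀ : ℂ) (r + ρ), ‖f z‖ ≤ M := fun z hz =>
    (norm_sum_le _ _).trans (by simpa only [norm_pow] using hM z hz)
  have := hf.norm_sub_le_of_norm_le_on_closedBall hρ hfM (hball u hu) (hball v hv)
  rwa [hfK, hfK, ← Complex.ofReal_sub, ← Complex.ofReal_sub, Complex.norm_real,
    Complex.norm_real, Real.norm_eq_abs, Real.norm_eq_abs] at this

theorem scaledLipschitzAt_cdKernel (p : ℕ → ℝ[X]) {x₀ : ℝ}
    (hbound : ∀ R : ℝ, ∃ B : ℝ, ∀ᶠ n : ℕ in atTop, ∀ z : ℂ, ‖z‖ < R →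
      (1 / (n + 1) : ℝ) * ∑ j ∈ Finset.range (n + 1), ‖aeval ((x₀ : ℂ) + z / n) (p j)‖ ^ 2 ≤ B) :
    ScaledLipschitzAt (fun n x => (1 / (n + 1) : ℝ) * CDKernel p n x x) x₀ := by
  intro R
  obtain ⟨B, hB⟩ := hbound (R + 2)
  refine ⟨B, ?_⟩
  filter_upwards [hB, eventually_gt_atTop 0] with n hBn hn u v hu hv
  have hn : (0 : ℝ) < n := by exact_mod_cast hn
  have hM : ∀ ζ ∈ closedBall (x₀ : ℂ) (R / n + 1 / n),
      ∑ j ∈ Finset.range (n + 1), ‖aeval ζ (p j)‖ ^ 2 ≤ (n + 1) * B := by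
    intro ζ hζ
    have hz : ‖(n : ℂ) * (ζ - x₀)‖ < R + 2 := by
      rw [mem_closedBall] at hζ
      rw [norm_mul, Complex.norm_natCast, ← dist_eq_norm]
      calc (n : ℝ) * dist ζ x₀ ≤ n * (R / n + 1 / n) := by gcongr
        _ < R + 2 := by field_simp; linarith
    have := hBn _ hz
    rw [mul_div_cancel_left₀ _ (by exact_mod_cast hn.ne' : (n : ℂ) ≠ 0), add_sub_cancel] at this
    rwa [one_div, inv_mul_le_iff₀ (by positivity)] at this
  calc |(1 / (n + 1) : ℝ) * CDKernel p n u u - (1 / (n + 1) : ℝ) * CDKernel p n v v|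
      = (1 / (n + 1) : ℝ) * |CDKernel p n u u - CDKernel p n v v| := by
        rw [← mul_sub, abs_mul, abs_of_pos (by positivity)]
    _ ≤ (1 / (n + 1) : ℝ) * ((n + 1) * B / (1 / n) * |u - v|) := by
        gcongr
        exact abs_cdKernel_sub_le p n (by positivity) hM hu hv
    _ = B * n * |u - v| := by field_simp

theorem stmt_1_general
    (p : ℕ → Polynomial ℝ)
    (Sig : Set ℝ)
    (hae : ∀ᵐ (x₀ : ℝ) ∂(volume.restrict Sig),
      (∀ ε : ℝ, 0 < ε → ∃ Cε : ℝ, 0 < Cε ∧ ∀ R : ℝ, ∃ N : ℕ,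
        ∀ n : ℕ, N < n → ∀ z : ℂ, ‖z‖ < R →
          (1 / (n + 1) : ℝ) *
              ∑ j ∈ Finset.range (n + 1), ‖Polynomial.aeval ((x₀ : ℂ) + z / n) (p j)‖ ^ 2 ≤
            Cε * Real.exp (ε * ‖z‖ ^ 2)) ∧
      (∃ k : ℝ, 0 < k ∧
        Tendsto (fun n : ℕ => (1 / (n + 1) : ℝ) * CDKernel p n x₀ x₀) atTop (nhds k))) :
    ∀ᵐ (x₀ : ℝ) ∂(volume.restrict Sig),
      ∀ A : ℝ, 0 < A →
        TendstoUniformlyOn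
          (fun (n : ℕ) (a : ℝ) => CDKernel p n (x₀ + a / n) (x₀ + a / n) / CDKernel p n x₀ x₀)
          (fun _ => 1) atTop (Icc (-A) A) := by
  have hg (n : ℕ) : Measurable fun x => (1 / (n + 1) : ℝ) * CDKernel p n x x := by
    unfold CDKernel
    fun_prop
  filter_upwards [hae, ae_restrict_of_ae (ae_tendstoUniformlyOn_comp_add_div hg)]
    with x₀ ⟨hcond, k, hk, hlim⟩ hwiggle A _
  have hbound (R : ℝ) : ∃ B : ℝ, ∀ᶠ n : ℕ in atTop, ∀ z : ℂ, ‖z‖ < R →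
      (1 / (n + 1) : ℝ) * ∑ j ∈ Finset.range (n + 1), ‖aeval ((x₀ : ℂ) + z / n) (p j)‖ ^ 2 ≤
        B := by
    obtain ⟨C, hC, hCR⟩ := hcond 1 one_pos
    obtain ⟨N, hN⟩ := hCR R
    refine ⟨C * Real.exp (R ^ 2), eventually_atTop.2 ⟨N + 1, fun n hn z hz =>
      (hN n hn z hz).trans ?_⟩⟩
    gcongr
    nlinarith [norm_nonneg z]
  refine ((hwiggle k hlim (scaledLipschitzAt_cdKernel p hbound) A).div_tendsto_self hlim
    hk.ne').congr (.of_forall fun n a _ => ?_)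
  exact mul_div_mul_left _ _ (by positivity)

/-- **Theorem 2** of Avila–Last–Simon.  Let `μ` be a probability measure on `ℝ` with compact,
infinite support, `p_n` its orthonormal polynomials, `K_n` the CD kernel, `w = dμ/dx`, and let
`Σ ⊆ {w > 0}` be measurable.  Suppose for Lebesgue-a.e. `x₀ ∈ Σ`: condition (3) holds at `x₀`
(for every `ε > 0` there is `C_ε > 0` so that for every `R` there is `N` with
`(1/(n+1)) K_n(x₀ + z/n, x₀ + z/n) ≤ C_ε exp(ε|z|²)` for `n > N`, `|z| < R`), and
`lim (1/(n+1)) K_n(x₀, x₀)` exists, is strictly positive and finite.  Then for a.e. `x₀ ∈ Σ`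
the Lubinsky wiggle condition holds: `K_n(x₀ + a/n, x₀ + a/n)/K_n(x₀, x₀) → 1` uniformly for
`a ∈ [-A, A]`, for every `A < ∞`. -/
theorem stmt_1
    (μ : Measure ℝ) [IsProbabilityMeasure μ]
    (hsupp_cpt : IsCompact (measSupport μ)) (hsupp_inf : (measSupport μ).Infinite)
    (p : ℕ → Polynomial ℝ)
    (hdeg : ∀ n : ℕ, (p n).natDegree = n)
    (hlead : ∀ n : ℕ, 0 < (p n).leadingCoeff)
    (horth : ∀ n m : ℕ, (∫ x, (p n).eval x * (p m).eval x ∂μ) = if n = m then 1 else 0)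
    (w : ℝ → ℝ) (hw : w = fun x => (μ.rnDeriv volume x).toReal)
    (Sig : Set ℝ) (hSigMeas : MeasurableSet Sig) (hSigSub : Sig ⊆ {x : ℝ | 0 < w x})
    (hae : ∀ᵐ (x₀ : ℝ) ∂(volume.restrict Sig),
      (∀ ε : ℝ, 0 < ε → ∃ Cε : ℝ, 0 < Cε ∧ ∀ R : ℝ, ∃ N : ℕ,
        ∀ n : ℕ, N < n → ∀ z : ℂ, ‖z‖ < R →
          (1 / (n + 1) : ℝ) *
              ∑ j ∈ Finset.range (n + 1), ‖Polynomial.aeval ((x₀ : ℂ) + z / n) (p j)‖ ^ 2 ≤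
            Cε * Real.exp (ε * ‖z‖ ^ 2)) ∧
      (∃ k : ℝ, 0 < k ∧
        Tendsto (fun n : ℕ => (1 / (n + 1) : ℝ) * CDKernel p n x₀ x₀) atTop (nhds k))) :
    ∀ᵐ (x₀ : ℝ) ∂(volume.restrict Sig),
      ∀ A : ℝ, 0 < A →
        TendstoUniformlyOn
          (fun (n : ℕ) (a : ℝ) => CDKernel p n (x₀ + a / n) (x₀ + a / n) / CDKernel p n x₀ x₀)
          (fun _ => 1) atTop (Icc (-A) A) :=
  stmt_1_general p Sig hae
end

section
/- (Proposition 2.2(b)) Let f : ℝ → ℝ be continuous with ∫_ℝ f(x)² dx ≤ 1 and f(0) = 1, and suppose its Fourier transform (as an L² function, with the convention f̂(k) = (2π)^{−1/2} ∫ f(x) e^{−ikx} dx) vanishes a.e. outside [−π, π]. Then f(x) = sin(πx)/(πx) for all x ∈ ℝ (with value 1 at x = 0). -/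
/-!
If `f` is the inverse Fourier transform of `g ∈ L²(-π, π)`, then for each `t` the numbers
`f (t + n) / √(2π)`, `n ∈ ℤ`, are the Fourier coefficients of `k ↦ g k * exp (i k t)` on
`(-π, π]`, so Parseval on the circle gives `∑ₙ |f (t + n)|² = ‖g‖₂²`. Integrating over
`t ∈ (0, 1]` yields Plancherel, `‖f‖₂ = ‖g‖₂ ≤ 1`. On the other hand
`1 = f 0 = (2π)^{-1/2} ∫ g`, so Cauchy–Schwarz holds with equality and `g` is the constant
`(2π)^{-1/2}`, whose inverse transform is `sin (π x) / (π x)`.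
-/

open MeasureTheory Set Complex
open scoped Real ENNReal

theorem Real.neg_pi_lt_pi : -π < π := by linarith [Real.pi_pos]

theorem norm_exp_I_mul_ofReal_mul_ofReal (k t : ℝ) : ‖cexp (I * k * t)‖ = 1 := by
  simp [norm_exp]

theorem ae_eq_const_of_integral_eq_of_integral_norm_sq_le {α E : Type*} [MeasurableSpace α]
    [NormedAddCommGroup E] [InnerProductSpace ℝ E] [CompleteSpace E]
    {μ : Measure α} [IsFiniteMeasure μ] {G : α → E} (hG : MemLp G 2 μ) {c : E}
    (hmean : ∫ x, G x ∂μ = μ.real univ • c)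
    (hnorm : ∫ x, ‖G x‖ ^ 2 ∂μ ≤ μ.real univ * ‖c‖ ^ 2) :
    G =ᵐ[μ] fun _ => c := by
  have hGi : Integrable G μ := hG.integrable one_le_two
  have hsq : Integrable (fun x => ‖G x‖ ^ 2) μ := hG.integrable_norm_pow two_ne_zero
  have hdev : Integrable (fun x => ‖G x - c‖ ^ 2) μ :=
    (hG.sub (memLp_const c)).integrable_norm_pow two_ne_zero
  have hGc : Integrable (fun x => inner ℝ (G x) c) μ := hGi.inner_const c
  have hinner : ∫ x, inner ℝ (G x) c ∂μ = μ.real univ * ‖c‖ ^ 2 := by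
    simp_rw [fun x => real_inner_comm c (G x)]
    rw [integral_inner hGi, hmean, inner_smul_right, real_inner_self_eq_norm_sq]
  have hzero : ∫ x, ‖G x - c‖ ^ 2 ∂μ = 0 := by
    refine le_antisymm ?_ (integral_nonneg fun _ => by positivity)
    calc ∫ x, ‖G x - c‖ ^ 2 ∂μ
        = ∫ x, ‖G x‖ ^ 2 ∂μ - 2 * ∫ x, inner ℝ (G x) c ∂μ
            + μ.real univ * ‖c‖ ^ 2 := by
          simp_rw [norm_sub_sq_real]
          rw [integral_add (by exact hsq.sub (hGc.const_mul 2)) (integrable_const _),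
            integral_sub hsq (hGc.const_mul 2), integral_const_mul, integral_const, smul_eq_mul]
      _ ≤ 0 := by rw [hinner]; linarith
  filter_upwards [(integral_eq_zero_iff_of_nonneg (fun _ => by positivity) hdev).1 hzero]
    with x hx
  simpa [sub_eq_zero] using hx

theorem integral_eq_intervalIntegral_of_ae_eq_zero {E : Type*} [NormedAddCommGroup E]
    [NormedSpace ℝ E] {f : ℝ → E} {a b : ℝ} (hab : a ≤ b)
    (hf : ∀ᵐ x, x ∉ Icc a b → f x = 0) :
    ∫ x, f x = ∫ x in a..b, f x := by
  rw [← setIntegral_eq_integral_of_ae_compl_eq_zero hf, integral_Icc_eq_integral_Ioc,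
    intervalIntegral.integral_of_le hab]

theorem lintegral_eq_setLIntegral_Ioc_tsum {φ : ℝ → ℝ≥0∞} (hφ : Measurable φ) :
    ∫⁻ x, φ x = ∫⁻ t in Ioc 0 1, ∑' n : ℤ, φ (t + n) := by
  rw [lintegral_tsum (f := fun (n : ℤ) t => φ (t + n))
      fun n => (hφ.comp (measurable_add_const _)).aemeasurable,
    ← setLIntegral_univ, ← iUnion_Ioc_intCast,
    lintegral_iUnion (fun n => measurableSet_Ioc) (pairwise_disjoint_Ioc_intCast ℝ)]
  refine tsum_congr fun n => ?_
  rw [← (measurePreserving_add_right volume (n : ℝ)).setLIntegral_comp_preimage_emb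
    (measurableEmbedding_addRight _), preimage_add_const_Ioc, sub_self, add_sub_cancel_left]

theorem integral_exp_I_mul_ofReal_mul_ofReal (x : ℝ) :
    ∫ k in -π..π, cexp (I * k * x) = 2 * π * Real.sinc (π * x) := by
  rcases eq_or_ne x 0 with rfl | hx
  · simp only [ofReal_zero, mul_zero, exp_zero, intervalIntegral.integral_const, real_smul,
      mul_one, Real.sinc_zero, ofReal_one]
    push_cast
    ring
  have hIx : I * x ≠ 0 := by simp [hx]
  have hπx : (π : ℂ) * x ≠ 0 := by simp [hx, Real.pi_ne_zero]
  simp_rw [mul_right_comm I]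
  rw [integral_exp_mul_complex hIx, Real.sinc_of_ne_zero (by simp [hx, Real.pi_ne_zero]),
    show I * x * ((-π : ℝ) : ℂ) = -(π * x) * I by push_cast; ring,
    show I * x * ((π : ℝ) : ℂ) = (π * x) * I by ring, exp_mul_I, exp_mul_I, cos_neg, sin_neg]
  push_cast
  field_simp
  ring

noncomputable def bandlimitedInvFourier (g : ℝ → ℂ) (x : ℝ) : ℂ :=
  ((√(2 * π))⁻¹ : ℝ) * ∫ k in -π..π, g k * cexp (I * k * x)

theorem bandlimitedInvFourier_congr_ae {g₁ g₂ : ℝ → ℂ}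
    (h : g₁ =ᵐ[volume.restrict (Ioc (-π) π)] g₂) :
    bandlimitedInvFourier g₁ = bandlimitedInvFourier g₂ := by
  ext x
  simp only [bandlimitedInvFourier, intervalIntegral.integral_of_le Real.neg_pi_lt_pi.le]
  congr 1
  exact integral_congr_ae (h.mul (ae_of_all _ fun _ => rfl))

theorem bandlimitedInvFourier_const (a : ℂ) (x : ℝ) :
    bandlimitedInvFourier (fun _ => a) x = a * √(2 * π) * Real.sinc (π * x) := by
  rw [bandlimitedInvFourier, intervalIntegral.integral_const_mul,
    integral_exp_I_mul_ofReal_mul_ofReal]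
  have hsqrt : ((√(2 * π))⁻¹ : ℝ) * (2 * π) = √(2 * π) := by
    rw [inv_mul_eq_div, div_eq_iff (by positivity), Real.mul_self_sqrt (by positivity)]
  rw [show (√(2 * π) : ℂ) = ((√(2 * π))⁻¹ : ℝ) * (2 * π) by exact_mod_cast hsqrt.symm]
  ring

theorem continuous_bandlimitedInvFourier {g : ℝ → ℂ}
    (hg : IntervalIntegrable g volume (-π) π) :
    Continuous (bandlimitedInvFourier g) := by
  refine continuous_const.mul (intervalIntegral.continuous_of_dominated_interval
    (bound := fun k => ‖g k‖) (fun x => ?_) (fun x => ae_of_all _ fun k _ => ?_) hg.norm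
    (ae_of_all _ fun k _ => by fun_prop))
  · exact hg.def'.1.mul (by fun_prop)
  · rw [norm_mul, norm_exp_I_mul_ofReal_mul_ofReal, mul_one]

theorem fourierCoeffOn_mul_exp_neg (g : ℝ → ℂ) (t : ℝ) (n : ℤ) :
    fourierCoeffOn Real.neg_pi_lt_pi (fun k => g k * cexp (I * k * t)) (-n)
      = ((√(2 * π))⁻¹ : ℝ) * bandlimitedInvFourier g (t + n) := by
  have hexp : ∀ k : ℝ, fourier (-(-n)) (k : AddCircle (π - -π)) • (g k * cexp (I * k * t))
      = g k * cexp (I * k * ↑(t + n)) := by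
    intro k
    rw [fourier_coe_apply, smul_eq_mul, mul_left_comm, ← Complex.exp_add]
    congr 2
    have : (π : ℂ) ≠ 0 := by exact_mod_cast Real.pi_ne_zero
    push_cast
    field_simp
    ring
  have hsqrt : ((√(2 * π))⁻¹ : ℝ) * ((√(2 * π))⁻¹ : ℝ) = 1 / (π - -π) := by
    rw [← mul_inv, Real.mul_self_sqrt (by positivity)]; ring
  rw [fourierCoeffOn_eq_integral, bandlimitedInvFourier, ← mul_assoc, ← ofReal_mul, hsqrt,
    Complex.real_smul]
  simp_rw [hexp]

theorem hasSum_norm_sq_bandlimitedInvFourier_add_int {g : ℝ → ℂ}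
    (hg : MemLp g 2 (volume.restrict (Ioc (-π) π))) (t : ℝ) :
    HasSum (fun n : ℤ => ‖bandlimitedInvFourier g (t + n)‖ ^ 2)
      (∫ k in -π..π, ‖g k‖ ^ 2) := by
  set h : ℝ → ℂ := fun k => g k * cexp (I * k * t)
  have hh : MemLp h 2 (volume.restrict (Ioc (-π) π)) :=
    hg.of_le (hg.1.mul (by fun_prop))
      (ae_of_all _ fun k => by simp [h, norm_exp_I_mul_ofReal_mul_ofReal])
  have hparseval :=
    (Equiv.neg ℤ).hasSum_iff.2 (hasSum_sq_fourierCoeffOn Real.neg_pi_lt_pi hh)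
  have hsqrt : ‖(√(2 * π))⁻¹‖ ^ 2 = (π - -π)⁻¹ := by
    rw [norm_inv, Real.norm_of_nonneg (by positivity), inv_pow, Real.sq_sqrt (by positivity)]
    ring
  simp only [Function.comp_def, Equiv.neg_apply, fourierCoeffOn_mul_exp_neg, norm_mul,
    Complex.norm_real, mul_pow, h, norm_exp_I_mul_ofReal_mul_ofReal, mul_one, hsqrt,
    smul_eq_mul] at hparseval
  have hpi : π - -π ≠ 0 := by linarith [Real.pi_pos]
  simpa [← mul_assoc, mul_inv_cancel₀ hpi] using hparseval.mul_left (π - -π)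

theorem lintegral_norm_sq_bandlimitedInvFourier {g : ℝ → ℂ}
    (hg : MemLp g 2 (volume.restrict (Ioc (-π) π))) :
    ∫⁻ x, ENNReal.ofReal (‖bandlimitedInvFourier g x‖ ^ 2)
      = ENNReal.ofReal (∫ k in -π..π, ‖g k‖ ^ 2) := by
  have hcont : Continuous (bandlimitedInvFourier g) := continuous_bandlimitedInvFourier <|
    (intervalIntegrable_iff_integrableOn_Ioc_of_le Real.neg_pi_lt_pi.le).2
      (hg.integrable one_le_two)
  rw [lintegral_eq_setLIntegral_Ioc_tsum (by fun_prop)]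
  have hsum : ∀ t : ℝ, ∑' n : ℤ, ENNReal.ofReal (‖bandlimitedInvFourier g (t + n)‖ ^ 2)
      = ENNReal.ofReal (∫ k in -π..π, ‖g k‖ ^ 2) := fun t => by
    have h := hasSum_norm_sq_bandlimitedInvFourier_add_int hg t
    rw [← ENNReal.ofReal_tsum_of_nonneg (fun n => by positivity) h.summable, h.tsum_eq]
  simp_rw [hsum]
  simp

theorem ae_eq_inv_sqrt_of_bandlimitedInvFourier_zero_eq_one {g : ℝ → ℂ}
    (hg : MemLp g 2 (volume.restrict (Ioc (-π) π))) (h0 : bandlimitedInvFourier g 0 = 1)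
    (hnorm : ∫ k in -π..π, ‖g k‖ ^ 2 ≤ 1) :
    g =ᵐ[volume.restrict (Ioc (-π) π)] fun _ => (((√(2 * π))⁻¹ : ℝ) : ℂ) := by
  set c : ℝ := (√(2 * π))⁻¹ with hc_def
  have hc2 : c * c * (2 * π) = 1 := by
    rw [hc_def, ← mul_inv, Real.mul_self_sqrt (by positivity), inv_mul_cancel₀ (by positivity)]
  have hvol : (volume.restrict (Ioc (-π) π)).real univ = 2 * π := by
    rw [measureReal_restrict_apply_univ, Real.volume_real_Ioc_of_le Real.neg_pi_lt_pi.le]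
    ring
  refine ae_eq_const_of_integral_eq_of_integral_norm_sq_le hg ?_ ?_ <;> rw [hvol]
  · simp only [bandlimitedInvFourier, ofReal_zero, mul_zero, exp_zero, mul_one,
      intervalIntegral.integral_of_le Real.neg_pi_lt_pi.le, ← hc_def] at h0
    have hc2' : (c : ℂ) * c * (2 * π) = 1 := by exact_mod_cast hc2
    rw [Complex.real_smul]
    push_cast
    linear_combination (-(∫ k in Ioc (-π) π, g k)) * hc2' + (2 * π * c) * h0
  · rw [intervalIntegral.integral_of_le Real.neg_pi_lt_pi.le] at hnorm
    rw [Complex.norm_real, Real.norm_eq_abs, sq_abs]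
    linarith

theorem stmt_5_general (f : ℝ → ℝ) (hf0 : f 0 = 1)
    (hL2 : (∫⁻ x : ℝ, ENNReal.ofReal ((f x) ^ 2)) ≤ 1)
    (hhat : ∃ g : ℝ → ℂ, MemLp g 2 (volume : Measure ℝ) ∧
      (∀ᵐ k : ℝ, k ∉ Set.Icc (-Real.pi) Real.pi → g k = 0) ∧
      ∀ x : ℝ, (f x : ℂ) =
        ((Real.sqrt (2 * Real.pi))⁻¹ : ℝ) *
          ∫ k : ℝ, g k * Complex.exp (Complex.I * k * x)) :
    ∀ x : ℝ, f x = if x = 0 then 1 else Real.sin (Real.pi * x) / (Real.pi * x) := by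
  obtain ⟨g, hg2, hgsupp, hgf⟩ := hhat
  have hfF : ∀ x, (f x : ℂ) = bandlimitedInvFourier g x := fun x => by
    rw [hgf x, bandlimitedInvFourier,
      integral_eq_intervalIntegral_of_ae_eq_zero Real.neg_pi_lt_pi.le]
    filter_upwards [hgsupp] with k hk hk' using by rw [hk hk', zero_mul]
  have hg : MemLp g 2 (volume.restrict (Ioc (-π) π)) := hg2.restrict _
  have hnorm : ∫ k in -π..π, ‖g k‖ ^ 2 ≤ 1 := by
    have hplancherel := lintegral_norm_sq_bandlimitedInvFourier hg
    simp_rw [← hfF, Complex.norm_real, Real.norm_eq_abs, sq_abs] at hplancherel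
    rwa [hplancherel, ENNReal.ofReal_le_one] at hL2
  have hconst := ae_eq_inv_sqrt_of_bandlimitedInvFourier_zero_eq_one hg
    (by rw [← hfF, hf0, ofReal_one]) hnorm
  have hsinc : ∀ x, f x = Real.sinc (π * x) := fun x => by
    have hx := hfF x
    rwa [bandlimitedInvFourier_congr_ae hconst, bandlimitedInvFourier_const, ← ofReal_mul,
      inv_mul_cancel₀ (by positivity), ofReal_one, one_mul, ofReal_inj] at hx
  intro x
  rw [hsinc, Real.sinc]
  simp [Real.pi_ne_zero]

/-- **Proposition 2.2(b)** of Avila–Last–Simon: let `f : ℝ → ℝ` be continuous with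
`∫_ℝ f(x)² dx ≤ 1` and `f(0) = 1`, and suppose its Fourier transform (with the convention
`f̂(k) = (2π)^{-1/2} ∫ f(x) e^{-ikx} dx`, as an `L²` function) vanishes a.e. outside `[-π, π]`;
equivalently, `f` is the inverse transform `f(x) = (2π)^{-1/2} ∫ g(k) e^{ikx} dk` of an `L²`
function `g` vanishing a.e. outside `[-π, π]`.  Then `f(x) = sin(πx)/(πx)` for all `x`. -/
theorem stmt_5 (f : ℝ → ℝ) (hcont : Continuous f) (hf0 : f 0 = 1)
    (hL2 : (∫⁻ x : ℝ, ENNReal.ofReal ((f x) ^ 2)) ≤ 1)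
    (hhat : ∃ g : ℝ → ℂ, MemLp g 2 (volume : Measure ℝ) ∧
      (∀ᵐ k : ℝ, k ∉ Set.Icc (-Real.pi) Real.pi → g k = 0) ∧
      ∀ x : ℝ, (f x : ℂ) =
        ((Real.sqrt (2 * Real.pi))⁻¹ : ℝ) *
          ∫ k : ℝ, g k * Complex.exp (Complex.I * k * x)) :
    ∀ x : ℝ, f x = if x = 0 then 1 else Real.sin (Real.pi * x) / (Real.pi * x) :=
  stmt_5_general f hf0 hL2 hhat
end

section
/- (Zero-avoidance lemma, from the proof of Theorem 2.1) Let (z_j)_{j∈ℤ} be a nondecreasing bi-infinite sequence of real numbers satisfying z_j − z_k ≥ (j − k) − 1 whenever j ≥ k. Then for every x ∈ ℝ there exists δ ∈ [0, 1] such that |z_j − (x + δ)| ≥ 1/10 and |z_j − (x − δ)| ≥ 1/10 for all j ∈ ℤ. Moreover, at most 5 of the z_j lie in the open interval (x − 1.1, x + 1.1). -/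
/-!
Since `z` grows at least like `j - 1`, two indices `j, k` with `z j, z k` within `1.1` of `x`
satisfy `j - k < 3.2`, so at most four `z j` lie in `(x - 1.1, x + 1.1)`. For the first claim,
`|z j - (x ± δ)| < 1/10` forces `||z j - x| - δ| < 1/10`; if each of the six candidates
`δ = 0, 1/5, …, 1` failed, the offending indices would be pairwise distinct (the candidates are
`1/5` apart) and all among those four.
-/

open Set

theorem Int.encard_le_add_one_of_forall_le_add {s : Set ℤ} {n : ℕ}
    (h : ∀ j ∈ s, ∀ k ∈ s, j ≤ k + n) : s.encard ≤ n + 1 := by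
  rcases s.eq_empty_or_nonempty with rfl | ⟨m, hm⟩
  · simp
  obtain ⟨k, hk, hk_le⟩ := Int.exists_least_of_bdd ⟨m - n, fun j hj ↦ by linarith [h m hm j hj]⟩
    ⟨m, hm⟩
  have hsub : s ⊆ (Finset.Icc k (k + n) : Set ℤ) := fun j hj ↦ by
    simpa using ⟨hk_le j hj, h j hj k hk⟩
  calc s.encard ≤ (Finset.Icc k (k + n) : Set ℤ).encard := encard_le_encard hsub
    _ = n + 1 := by rw [encard_coe_eq_coe_finsetCard, Int.card_Icc]; norm_cast; omega

theorem exists_mem_Icc_forall_le_abs_sub {ι : Type*} (w : ι → ℝ) {ε : ℝ} {n : ℕ} (hε : 0 < ε)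
    (hn : 2 * ε * n ≤ 1) (hw : {i | w i < 1 + ε}.encard ≤ n) :
    ∃ δ ∈ Icc (0 : ℝ) 1, ∀ i, ε ≤ |w i - δ| := by
  by_contra! hcon
  have hgrid : ∀ k : Fin (n + 1), 2 * ε * k ∈ Icc (0 : ℝ) 1 := fun k ↦
    ⟨by positivity, hn.trans' (by gcongr; exact_mod_cast Nat.lt_succ_iff.mp k.isLt)⟩
  choose f hf using fun k : Fin (n + 1) ↦ hcon _ (hgrid k)
  have hf_inj : Function.Injective f := by
    intro k l hkl
    have := abs_sub_lt_iff.mp (hf k)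
    have := abs_sub_lt_iff.mp (hf l)
    rw [hkl] at *
    have hk_lt : (k : ℕ) < l + 1 := by exact_mod_cast (by nlinarith : (k : ℝ) < l + 1)
    have hl_lt : (l : ℕ) < k + 1 := by exact_mod_cast (by nlinarith : (l : ℝ) < k + 1)
    exact Fin.ext (by omega)
  have hmaps : MapsTo f univ {i | w i < 1 + ε} := fun k _ ↦ by
    have := abs_sub_lt_iff.mp (hf k)
    have := (hgrid k).2
    show w (f k) < 1 + ε
    linarith
  have := (encard_le_encard_of_injOn hmaps hf_inj.injOn).trans hw
  simp only [encard_univ, ENat.card_eq_coe_fintype_card, Fintype.card_fin] at this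
  norm_cast at this
  omega

theorem abs_abs_sub_le_abs_sub_and_abs_add {a δ : ℝ} (hδ : 0 ≤ δ) :
    |(|a| - δ)| ≤ |a - δ| ∧ |(|a| - δ)| ≤ |a + δ| := by
  constructor
  · simpa [abs_of_nonneg hδ] using abs_abs_sub_abs_le_abs_sub a δ
  · simpa [abs_of_nonneg hδ] using abs_abs_sub_abs_le_abs_sub a (-δ)

section GapSequence

variable {z : ℤ → ℝ} (hgap : ∀ j k : ℤ, k ≤ j → ((j : ℝ) - (k : ℝ)) - 1 ≤ z j - z k)
include hgap

theorem sub_lt_of_abs_sub_lt {x r : ℝ} {j k : ℤ} (hj : |z j - x| < r) (hk : |z k - x| < r) :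
    (j : ℝ) - k < 2 * r + 1 := by
  rcases le_total k j with hkj | hjk
  · linarith [hgap j k hkj, abs_sub_lt_iff.mp hj, abs_sub_lt_iff.mp hk]
  · linarith [(abs_nonneg _).trans_lt hj, (Int.cast_le (R := ℝ)).mpr hjk]

theorem encard_abs_sub_lt_le_four (x : ℝ) : {j | |z j - x| < 1.1}.encard ≤ 4 := by
  refine Int.encard_le_add_one_of_forall_le_add (n := 3) fun j hj k hk ↦ ?_
  have : (j : ℝ) - k < 4 := by linarith [sub_lt_of_abs_sub_lt hgap hj hk]
  have : j - k < 4 := by exact_mod_cast this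
  push_cast
  omega

end GapSequence

theorem stmt_7_general (z : ℤ → ℝ)
    (hgap : ∀ j k : ℤ, k ≤ j → ((j : ℝ) - (k : ℝ)) - 1 ≤ z j - z k) :
    ∀ x : ℝ,
      (∃ δ ∈ Set.Icc (0 : ℝ) 1,
        ∀ j : ℤ, (1 : ℝ) / 10 ≤ |z j - (x + δ)| ∧ (1 : ℝ) / 10 ≤ |z j - (x - δ)|) ∧
      Set.ncard {j : ℤ | x - 1.1 < z j ∧ z j < x + 1.1} ≤ 5 := by
  intro x
  have hnear := encard_abs_sub_lt_le_four hgap x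
  constructor
  · obtain ⟨δ, hδ, hfar⟩ := exists_mem_Icc_forall_le_abs_sub (fun j ↦ |z j - x|) (ε := 1 / 10)
      (n := 5) (by norm_num) (by norm_num)
      (by rw [show (1 : ℝ) + 1 / 10 = 1.1 by norm_num]; exact hnear.trans (by norm_num))
    refine ⟨δ, hδ, fun j ↦ ?_⟩
    have := abs_abs_sub_le_abs_sub_and_abs_add (a := z j - x) hδ.1
    rw [show z j - (x + δ) = z j - x - δ by ring, show z j - (x - δ) = z j - x + δ by ring]
    exact ⟨(hfar j).trans this.1, (hfar j).trans this.2⟩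
  · have hset : {j : ℤ | x - 1.1 < z j ∧ z j < x + 1.1} = {j | |z j - x| < 1.1} := by
      ext j
      simp only [mem_ofPred_eq, abs_sub_lt_iff]
      constructor <;> intro h <;> constructor <;> linarith [h.1, h.2]
    rw [hset]
    exact ((encard_le_coe_iff_finite_ncard_le.mp hnear).2).trans (by norm_num)

/-- **Zero-avoidance lemma** from the proof of Theorem 2.1 in Avila–Last–Simon: if
`(z_j)_{j ∈ ℤ}` is nondecreasing with `z_j - z_k ≥ (j - k) - 1` for `k ≤ j`, then for every
`x ∈ ℝ` there is `δ ∈ [0,1]` with `|z_j - (x ± δ)| ≥ 1/10` for all `j`, and at most `5` of the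
`z_j` lie in `(x - 1.1, x + 1.1)`. -/
theorem stmt_7 (z : ℤ → ℝ) (hmono : Monotone z)
    (hgap : ∀ j k : ℤ, k ≤ j → ((j : ℝ) - (k : ℝ)) - 1 ≤ z j - z k) :
    ∀ x : ℝ,
      (∃ δ ∈ Set.Icc (0 : ℝ) 1,
        ∀ j : ℤ, (1 : ℝ) / 10 ≤ |z j - (x + δ)| ∧ (1 : ℝ) / 10 ≤ |z j - (x - δ)|) ∧
      Set.ncard {j : ℤ | x - 1.1 < z j ∧ z j < x + 1.1} ≤ 5 :=
  stmt_7_general z hgap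
end

section
/- (Theorem 3, first part) Fix x₀ ∈ ℝ and suppose sup_n (1/(n+1)) Σ_{j=0}^n ‖T_j(x₀)‖² ≤ C < ∞. Then for all z ∈ ℂ and all n ≥ 0, (1/(n+1)) Σ_{j=0}^n ‖T_j(x₀ + z/(n+1))‖² ≤ C exp(2 C α_-^{−1} |z|). -/
/-!
Write `T_n = T_n(x₀)` and `U_n = T_n⁻¹ T_n(x₀ + w)`. Since `A_{n+1}(x₀ + w) - A_{n+1}(x₀)` has
norm `|w| / a_{n+1} ≤ |w| / α₋`, and `‖T_n⁻¹‖ ≤ ‖T_n‖` because `det T_n = 1`, the recursion for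
`U` gives `‖U_{n+1}‖ ≤ (1 + |w| α₋⁻¹ ‖T_{n+1}‖ ‖T_n‖) ‖U_n‖`. The discrete Grönwall inequality
then yields `‖T_n(x₀ + w)‖ ≤ ‖T_n‖ exp (|w| α₋⁻¹ ∑_{k<n} ‖T_{k+1}‖ ‖T_k‖)`. For `w = z / (n + 1)`,
AM–GM bounds the sum by `∑_{k≤n} ‖T_k‖² ≤ C (n + 1)`; squaring and averaging gives the claim.
-/

open scoped Matrix.Norms.L2Operator

/-- The one-step matrix `A_j(z)` built from Jacobi parameters. -/
noncomputable def jacobiA (a b : ℕ → ℝ) (j : ℕ) (z : ℂ) : Matrix (Fin 2) (Fin 2) ℂ :=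
  !![(z - (b j : ℂ)) / (a j : ℂ), -1 / (a j : ℂ); ((a j : ℂ)), 0]

/-- The transfer matrix `T_n(z) = A_n(z) ⋯ A_1(z)`, with `T_0(z) = I`. -/
noncomputable def transfer (a b : ℕ → ℝ) : ℕ → ℂ → Matrix (Fin 2) (Fin 2) ℂ
  | 0 => fun _ => 1
  | n + 1 => fun z => jacobiA a b (n + 1) z * transfer a b n z

open Matrix Finset

namespace Matrix

theorem l2_opNorm_adjugate_fin_two_le (M : Matrix (Fin 2) (Fin 2) ℂ) : ‖M.adjugate‖ ≤ ‖M‖ := by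
  -- `σ` is an antiunitary that intertwines `adjugate M` with `Mᴴ`.
  let σ : EuclideanSpace ℂ (Fin 2) → EuclideanSpace ℂ (Fin 2) :=
    fun w => !₂[star (w 1), -star (w 0)]
  have hσ : ∀ w, ‖σ w‖ = ‖w‖ := fun w => by
    simp [σ, EuclideanSpace.norm_eq, Fin.sum_univ_two, add_comm]
  have hcomm : ∀ v,
      σ (toEuclideanCLM (𝕜 := ℂ) M.adjugate v) = toEuclideanCLM (𝕜 := ℂ) Mᴴ (σ v) := by
    intro v
    ext i
    fin_cases i <;> simp [σ, adjugate_fin_two, mulVec, dotProduct, Fin.sum_univ_two, add_comm]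
  rw [cstar_norm_def]
  refine ContinuousLinearMap.opNorm_le_bound _ (norm_nonneg _) fun v => ?_
  calc ‖toEuclideanCLM (𝕜 := ℂ) M.adjugate v‖ = ‖toEuclideanCLM (𝕜 := ℂ) Mᴴ (σ v)‖ := by
        rw [← hcomm, hσ]
    _ ≤ ‖Mᴴ‖ * ‖σ v‖ := (toEuclideanCLM (𝕜 := ℂ) Mᴴ).le_opNorm _
    _ = ‖M‖ * ‖v‖ := by rw [l2_opNorm_conjTranspose, hσ]

theorem l2_opNorm_inv_le_of_det_eq_one {M : Matrix (Fin 2) (Fin 2) ℂ} (h : M.det = 1) :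
    ‖M⁻¹‖ ≤ ‖M‖ := by
  rw [inv_def, h, Ring.inverse_one, one_smul]
  exact l2_opNorm_adjugate_fin_two_le M

end Matrix

section Transfer

variable {a b : ℕ → ℝ}

theorem det_jacobiA {j : ℕ} (h : a j ≠ 0) (z : ℂ) : (jacobiA a b j z).det = 1 := by
  have : (a j : ℂ) ≠ 0 := by exact_mod_cast h
  simp only [jacobiA, det_fin_two_of, mul_zero, zero_sub]
  field_simp

theorem det_transfer (h : ∀ n, a (n + 1) ≠ 0) (j : ℕ) (z : ℂ) : (transfer a b j z).det = 1 := by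
  induction j with
  | zero => simp [transfer]
  | succ n ih => rw [transfer, det_mul, ih, det_jacobiA (h n), one_mul]

theorem jacobiA_sub_jacobiA (j : ℕ) (z₁ z₂ : ℂ) :
    jacobiA a b j z₂ - jacobiA a b j z₁ = diagonal ![(z₂ - z₁) / a j, 0] := by
  ext i k
  fin_cases i <;> fin_cases k <;> simp [jacobiA, sub_div]

theorem norm_jacobiA_sub_jacobiA {j : ℕ} (h : 0 < a j) (z₁ z₂ : ℂ) :
    ‖jacobiA a b j z₂ - jacobiA a b j z₁‖ = ‖z₂ - z₁‖ / a j := by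
  simp [jacobiA_sub_jacobiA, Pi.norm_def, Fin.univ_succ, abs_of_pos h]

theorem transfer_inv_mul_transfer_succ (h : ∀ n, a (n + 1) ≠ 0) (n : ℕ) (z₁ z₂ : ℂ) :
    (transfer a b (n + 1) z₁)⁻¹ * transfer a b (n + 1) z₂ =
      (1 + (transfer a b (n + 1) z₁)⁻¹ * (jacobiA a b (n + 1) z₂ - jacobiA a b (n + 1) z₁) *
        transfer a b n z₁) * ((transfer a b n z₁)⁻¹ * transfer a b n z₂) := by
  set X := (transfer a b (n + 1) z₁)⁻¹
  have hX : X * transfer a b (n + 1) z₁ = 1 :=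
    nonsing_inv_mul _ (by rw [det_transfer h]; exact isUnit_one)
  have hT : transfer a b n z₁ * (transfer a b n z₁)⁻¹ = 1 :=
    mul_nonsing_inv _ (by rw [det_transfer h]; exact isUnit_one)
  have hinv : (transfer a b n z₁)⁻¹ = X * jacobiA a b (n + 1) z₁ :=
    inv_eq_left_inv (by rw [mul_assoc]; exact hX)
  have hstep : transfer a b (n + 1) z₂ = jacobiA a b (n + 1) z₂ * transfer a b n z₂ := rfl
  calc X * transfer a b (n + 1) z₂
      = X * jacobiA a b (n + 1) z₁ * transfer a b n z₂
        + X * (jacobiA a b (n + 1) z₂ - jacobiA a b (n + 1) z₁) * transfer a b n z₂ := by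
        rw [hstep]; noncomm_ring
    _ = _ := by
        rw [← hinv, add_mul, one_mul, mul_assoc _ (transfer a b n z₁),
          ← mul_assoc (transfer a b n z₁), hT, one_mul]

theorem norm_transfer_inv_mul_transfer_le {α : ℝ} (hα : 0 < α) (ha : ∀ n, α ≤ a (n + 1))
    (z₁ z₂ : ℂ) (n : ℕ) :
    ‖(transfer a b n z₁)⁻¹ * transfer a b n z₂‖ ≤ Real.exp (∑ k ∈ range n,
      ‖z₂ - z₁‖ / α * (‖transfer a b (k + 1) z₁‖ * ‖transfer a b k z₁‖)) := by
  have ha₀ : ∀ n, a (n + 1) ≠ 0 := fun n => (hα.trans_le (ha n)).ne'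
  have hD : ∀ k, ‖jacobiA a b (k + 1) z₂ - jacobiA a b (k + 1) z₁‖ ≤ ‖z₂ - z₁‖ / α := fun k => by
    rw [norm_jacobiA_sub_jacobiA (hα.trans_le (ha k))]
    exact div_le_div_of_nonneg_left (norm_nonneg _) hα (ha k)
  have hrec : ∀ k ≥ 0, ‖(transfer a b (k + 1) z₁)⁻¹ * transfer a b (k + 1) z₂‖ ≤
      (1 + ‖z₂ - z₁‖ / α * (‖transfer a b (k + 1) z₁‖ * ‖transfer a b k z₁‖)) *
        ‖(transfer a b k z₁)⁻¹ * transfer a b k z₂‖ + 0 := fun k _ => by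
    have hX := l2_opNorm_inv_le_of_det_eq_one (det_transfer ha₀ (k + 1) z₁ (b := b))
    rw [add_zero, transfer_inv_mul_transfer_succ ha₀]
    refine (norm_mul_le _ _).trans (mul_le_mul_of_nonneg_right ?_ (norm_nonneg _))
    calc _ ≤ ‖(1 : Matrix (Fin 2) (Fin 2) ℂ)‖ + ‖(transfer a b (k + 1) z₁)⁻¹‖ *
          ‖jacobiA a b (k + 1) z₂ - jacobiA a b (k + 1) z₁‖ * ‖transfer a b k z₁‖ :=
          (norm_add_le _ _).trans (by gcongr; exact norm_mul₃_le)
      _ ≤ 1 + ‖transfer a b (k + 1) z₁‖ * (‖z₂ - z₁‖ / α) * ‖transfer a b k z₁‖ := by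
          rw [norm_one]; gcongr; exact hD k
      _ = _ := by ring
  have := discrete_gronwall (n₀ := 0) (b := 0)
    (u := fun k => ‖(transfer a b k z₁)⁻¹ * transfer a b k z₂‖) (norm_nonneg _) hrec
    (fun k _ => by positivity) (fun _ _ => le_rfl) n.zero_le
  simpa [transfer, ← range_eq_Ico] using this

theorem norm_transfer_le_mul_exp {α : ℝ} (hα : 0 < α) (ha : ∀ n, α ≤ a (n + 1))
    (z₁ z₂ : ℂ) (n : ℕ) :
    ‖transfer a b n z₂‖ ≤ ‖transfer a b n z₁‖ * Real.exp (∑ k ∈ range n,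
      ‖z₂ - z₁‖ / α * (‖transfer a b (k + 1) z₁‖ * ‖transfer a b k z₁‖)) := by
  have hT : transfer a b n z₁ * (transfer a b n z₁)⁻¹ = 1 :=
    mul_nonsing_inv _ (by rw [det_transfer fun n => (hα.trans_le (ha n)).ne']; exact isUnit_one)
  calc ‖transfer a b n z₂‖
      = ‖transfer a b n z₁ * ((transfer a b n z₁)⁻¹ * transfer a b n z₂)‖ := by
        rw [← mul_assoc, hT, one_mul]
    _ ≤ _ := (norm_mul_le _ _).trans <|
        mul_le_mul_of_nonneg_left (norm_transfer_inv_mul_transfer_le hα ha z₁ z₂ n) (norm_nonneg _)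

theorem norm_transfer_add_div_le {α : ℝ} (hα : 0 < α) (ha : ∀ n, α ≤ a (n + 1)) (x z : ℂ)
    {C : ℝ} {n j : ℕ}
    (hC : ∑ k ∈ range n, ‖transfer a b (k + 1) x‖ * ‖transfer a b k x‖ ≤ C * (n + 1)) (hj : j ≤ n) :
    ‖transfer a b j (x + z / (n + 1))‖ ≤ ‖transfer a b j x‖ * Real.exp (C * α⁻¹ * ‖z‖) := by
  refine (norm_transfer_le_mul_exp hα ha _ _ j).trans
    (mul_le_mul_of_nonneg_left ?_ (norm_nonneg _))
  have hδ : ‖x + z / (n + 1) - x‖ / α = ‖z‖ / (n + 1) / α := by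
    rw [add_sub_cancel_left, norm_div]; norm_cast
  rw [Real.exp_le_exp, ← mul_sum, hδ]
  calc ‖z‖ / (n + 1) / α * ∑ k ∈ range j, ‖transfer a b (k + 1) x‖ * ‖transfer a b k x‖
      ≤ ‖z‖ / (n + 1) / α * ∑ k ∈ range n, ‖transfer a b (k + 1) x‖ * ‖transfer a b k x‖ := by
        gcongr
    _ ≤ ‖z‖ / (n + 1) / α * (C * (n + 1)) := by gcongr
    _ = C * α⁻¹ * ‖z‖ := by field_simp

end Transfer

theorem sum_range_mul_succ_le_sum_sq (t : ℕ → ℝ) (n : ℕ) :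
    ∑ k ∈ range n, t (k + 1) * t k ≤ ∑ k ∈ range (n + 1), t k ^ 2 := by
  have hsucc : ∑ k ∈ range n, t (k + 1) ^ 2 ≤ ∑ k ∈ range (n + 1), t k ^ 2 := by
    rw [sum_range_succ']; exact le_add_of_nonneg_right (sq_nonneg _)
  have hself : ∑ k ∈ range n, t k ^ 2 ≤ ∑ k ∈ range (n + 1), t k ^ 2 := by
    rw [sum_range_succ]; exact le_add_of_nonneg_right (sq_nonneg _)
  have hamgm : ∑ k ∈ range n, t (k + 1) * t k ≤ ∑ k ∈ range n, (t (k + 1) ^ 2 + t k ^ 2) / 2 :=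
    sum_le_sum fun k _ => by nlinarith [sq_nonneg (t (k + 1) - t k)]
  rw [← sum_div, sum_add_distrib] at hamgm
  linarith

/-- **Theorem 3, first part** of Avila–Last–Simon: if the Ces\`aro averages
`(1/(n+1)) Σ_{j=0}^n ‖T_j(x₀)‖²` are bounded by `C`, then for all `z ∈ ℂ` and all `n`,
`(1/(n+1)) Σ_{j=0}^n ‖T_j(x₀ + z/(n+1))‖² ≤ C exp(2 C α₋⁻¹ |z|)`, where `α₋ = inf_n a_n > 0`
and `‖·‖` is the Euclidean operator norm. -/
theorem stmt_9 (a b : ℕ → ℝ) (hapos : ∀ n : ℕ, 0 < a (n + 1))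
    (αm : ℝ) (hαm_pos : 0 < αm) (hαm : αm = ⨅ n : ℕ, a (n + 1))
    (x₀ : ℝ) (C : ℝ)
    (hC : ∀ n : ℕ,
      (1 / (n + 1) : ℝ) * ∑ j ∈ Finset.range (n + 1), ‖transfer a b j (x₀ : ℂ)‖ ^ 2 ≤ C) :
    ∀ (z : ℂ) (n : ℕ),
      (1 / (n + 1) : ℝ) *
          ∑ j ∈ Finset.range (n + 1), ‖transfer a b j ((x₀ : ℂ) + z / (n + 1))‖ ^ 2 ≤
        C * Real.exp (2 * C * αm⁻¹ * ‖z‖) := by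
  intro z n
  have hn : (0 : ℝ) < n + 1 := by positivity
  have ha : ∀ k, αm ≤ a (k + 1) := fun k => hαm ▸ ciInf_le ⟨0, by
    rintro _ ⟨m, rfl⟩; exact (hapos m).le⟩ k
  have hsum : ∑ k ∈ range n, ‖transfer a b (k + 1) x₀‖ * ‖transfer a b k x₀‖ ≤ C * (n + 1) := by
    have := hC n
    rw [one_div, inv_mul_le_iff₀ hn] at this
    linarith [sum_range_mul_succ_le_sum_sq (fun j => ‖transfer a b j (x₀ : ℂ)‖) n]
  calc (1 / (n + 1) : ℝ) * ∑ j ∈ range (n + 1), ‖transfer a b j (x₀ + z / (n + 1))‖ ^ 2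
      ≤ (1 / (n + 1) : ℝ) * ∑ j ∈ range (n + 1),
          (‖transfer a b j x₀‖ * Real.exp (C * αm⁻¹ * ‖z‖)) ^ 2 := by
        gcongr with j hj
        exact norm_transfer_add_div_le hαm_pos ha _ z hsum (Nat.lt_succ_iff.mp (mem_range.mp hj))
    _ = (1 / (n + 1) : ℝ) * (∑ j ∈ range (n + 1), ‖transfer a b j x₀‖ ^ 2) *
          Real.exp (C * αm⁻¹ * ‖z‖) ^ 2 := by
        simp_rw [mul_pow, ← sum_mul, mul_assoc]
    _ ≤ C * Real.exp (C * αm⁻¹ * ‖z‖) ^ 2 := by gcongr; exact hC n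
    _ = C * Real.exp (2 * C * αm⁻¹ * ‖z‖) := by rw [← Real.exp_nat_mul]; push_cast; ring_nf
end

section
/- (Lemma 5.5, abstract form) Assume additionally that S is ergodic with respect to η. Then for every L < ∞ and every ε > 0 there is K < ∞ such that for η-a.e. ω with ‖V_0(ω)‖ < L and every 2×2 complex matrix C with ‖C‖ < L, one has limsup_{n→∞} (1/n) Σ_{0 ≤ j ≤ n−1, ‖T_j(ω)C‖ ≥ K} ‖T_j(ω)C‖² ≤ ε. -/
/-!
Since `det V₀ = 1`, `‖V₀⁻¹‖ ≤ 3‖V₀‖`, so `‖T_j(ω) C‖ ≤ 3L² ‖V₀(S^j ω)‖` whenever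
`‖V₀(ω)‖, ‖C‖ < L`. With `K = 3L² R`, every term that survives the cut-off is bounded by
`9L⁴ g(S^j ω)`, where `g = ‖V₀‖² · 1{‖V₀‖ ≥ R}`, so the averages are dominated by Birkhoff averages
of `g`. Choosing `R` with `∫ g < ε / 9L⁴`, it remains to see that for ergodic `S` the Birkhoff
averages of an integrable `g` are eventually below any `c > ∫ g`. Replacing `g` by `g - b` with
`∫ g < b < c`, it suffices that the Birkhoff sums of a function with negative integral are a.e.
bounded above. The set where they are bounded above is exactly `S`-invariant, so by ergodicity it
is null or conull; if it were null, the set where some Birkhoff sum is positive would be conull,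
and Garsia's maximal ergodic lemma would force the integral to be nonnegative.
-/

open MeasureTheory Filter
open scoped Matrix.Norms.L2Operator

noncomputable instance : MeasurableSpace (Matrix (Fin 2) (Fin 2) ℂ) := borel _

open Set

instance : BorelSpace (Matrix (Fin 2) (Fin 2) ℂ) := ⟨rfl⟩

namespace Matrix

variable {𝕜 : Type*} [RCLike 𝕜]

lemma norm_entry_le_l2_opNorm {m n : Type*} [Fintype m] [Fintype n] [DecidableEq n]
    (A : Matrix m n 𝕜) (i : m) (j : n) : ‖A i j‖ ≤ ‖A‖ := by
  have h := A.l2_opNorm_mulVec (EuclideanSpace.single j 1)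
  rw [PiLp.norm_single, norm_one, mul_one] at h
  refine le_trans (le_of_eq ?_) ((PiLp.norm_apply_le _ i).trans h)
  simp

lemma adjugate_fin_two_eq_trace_smul_one_sub {R : Type*} [CommRing R]
    (A : Matrix (Fin 2) (Fin 2) R) : A.adjugate = A.trace • (1 : Matrix (Fin 2) (Fin 2) R) - A := by
  ext i j
  fin_cases i <;> fin_cases j <;> simp [adjugate_fin_two, trace_fin_two]

lemma l2_opNorm_inv_le_of_det_eq_one_s16 {A : Matrix (Fin 2) (Fin 2) 𝕜} (hA : A.det = 1) :
    ‖A⁻¹‖ ≤ 3 * ‖A‖ := by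
  have htrace : ‖A.trace‖ ≤ 2 * ‖A‖ := by
    rw [trace_fin_two]
    linarith [norm_add_le (A 0 0) (A 1 1), norm_entry_le_l2_opNorm A 0 0,
      norm_entry_le_l2_opNorm A 1 1]
  rw [inv_def, hA, Ring.inverse_one, one_smul, adjugate_fin_two_eq_trace_smul_one_sub]
  calc ‖A.trace • (1 : Matrix (Fin 2) (Fin 2) 𝕜) - A‖
      ≤ ‖A.trace‖ * ‖(1 : Matrix (Fin 2) (Fin 2) 𝕜)‖ + ‖A‖ :=
        (norm_sub_le _ _).trans (add_le_add_left (norm_smul_le _ _) _)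
    _ ≤ 3 * ‖A‖ := by rw [norm_one]; linarith

lemma l2_opNorm_mul_inv_mul_le (A : Matrix (Fin 2) (Fin 2) 𝕜) {B : Matrix (Fin 2) (Fin 2) 𝕜}
    (hB : B.det = 1) (C : Matrix (Fin 2) (Fin 2) 𝕜) : ‖A * B⁻¹ * C‖ ≤ 3 * ‖A‖ * ‖B‖ * ‖C‖ :=
  calc ‖A * B⁻¹ * C‖ ≤ ‖A‖ * ‖B⁻¹‖ * ‖C‖ := by
        grw [l2_opNorm_mul, l2_opNorm_mul]
    _ ≤ ‖A‖ * (3 * ‖B‖) * ‖C‖ := by grw [l2_opNorm_inv_le_of_det_eq_one_s16 hB]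
    _ = 3 * ‖A‖ * ‖B‖ * ‖C‖ := by ring

end Matrix

section MaximalErgodic

variable {Ω : Type*} {f : Ω → Ω} {g : Ω → ℝ}

def birkhoffSumMax (f : Ω → Ω) (g : Ω → ℝ) (N : ℕ) : Ω → ℝ :=
  (Finset.range (N + 1)).sup' Finset.nonempty_range_add_one fun k => birkhoffSum f g k

lemma birkhoffSumMax_apply (N : ℕ) (x : Ω) :
    birkhoffSumMax f g N x =
      (Finset.range (N + 1)).sup' Finset.nonempty_range_add_one fun k => birkhoffSum f g k x :=
  Finset.sup'_apply _ _ _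

lemma birkhoffSum_le_birkhoffSumMax {k N : ℕ} (hk : k ≤ N) (x : Ω) :
    birkhoffSum f g k x ≤ birkhoffSumMax f g N x := by
  rw [birkhoffSumMax_apply]
  exact Finset.le_sup' (fun k => birkhoffSum f g k x) (Finset.mem_range_succ_iff.2 hk)

lemma birkhoffSumMax_nonneg (N : ℕ) (x : Ω) : 0 ≤ birkhoffSumMax f g N x :=
  (birkhoffSum_zero f g x).symm.le.trans (birkhoffSum_le_birkhoffSumMax N.zero_le x)

lemma birkhoffSumMax_le_max (N : ℕ) (x : Ω) :
    birkhoffSumMax f g N x ≤ max 0 (g x + birkhoffSumMax f g N (f x)) := by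
  rw [birkhoffSumMax_apply]
  refine Finset.sup'_le _ _ fun k hk => ?_
  cases k with
  | zero => simp
  | succ k =>
    rw [birkhoffSum_succ']
    refine le_max_of_le_right ?_
    gcongr
    exact birkhoffSum_le_birkhoffSumMax (Nat.le_of_succ_le (Finset.mem_range_succ_iff.1 hk)) _

lemma birkhoffSumMax_pos_iff {N : ℕ} {x : Ω} :
    0 < birkhoffSumMax f g N x ↔ ∃ k ≤ N, 0 < birkhoffSum f g k x := by
  simp [birkhoffSumMax_apply, Finset.lt_sup'_iff]

lemma bddAbove_range_birkhoffSum_apply_iff {x : Ω} :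
    BddAbove (range fun n => birkhoffSum f g n (f x)) ↔
      BddAbove (range fun n => birkhoffSum f g n x) := by
  simp only [bddAbove_def, forall_mem_range]
  constructor
  · rintro ⟨C, hC⟩
    refine ⟨max 0 (g x + C), fun n => ?_⟩
    cases n with
    | zero => simp
    | succ n => exact le_max_of_le_right (by rw [birkhoffSum_succ']; linarith [hC n])
  · rintro ⟨C, hC⟩
    exact ⟨C - g x, fun n => by linarith [hC (n + 1), birkhoffSum_succ' f g n x]⟩

variable [MeasurableSpace Ω] {μ : Measure Ω}

lemma measurable_birkhoffSum (hf : Measurable f) (hg : Measurable g) (n : ℕ) :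
    Measurable (birkhoffSum f g n) :=
  Finset.measurable_sum _ fun k _ => hg.comp (hf.iterate k)

lemma measurable_birkhoffSumMax (hf : Measurable f) (hg : Measurable g) (N : ℕ) :
    Measurable (birkhoffSumMax f g N) :=
  Finset.measurable_range_sup' fun k _ => measurable_birkhoffSum hf hg k

lemma integrable_birkhoffSumMax (hf : MeasurePreserving f μ μ) (hg : Integrable g μ) (N : ℕ) :
    Integrable (birkhoffSumMax f g N) μ :=
  Finset.sup'_induction (p := fun φ => Integrable φ μ) _ _ (fun _ h₁ _ h₂ => h₁.sup h₂) fun _ _ =>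
    integrable_finsetSum _ fun j _ => (hf.iterate j).integrable_comp_of_integrable hg

/-- Garsia's maximal ergodic lemma. -/
theorem setIntegral_birkhoffSumMax_pos_nonneg (hf : MeasurePreserving f μ μ) (hgm : Measurable g)
    (hgi : Integrable g μ) (N : ℕ) :
    0 ≤ ∫ x in {x | 0 < birkhoffSumMax f g N x}, g x ∂μ := by
  set Φ := birkhoffSumMax f g N
  set E := {x | 0 < Φ x}
  have hΦm : Measurable Φ := measurable_birkhoffSumMax hf.measurable hgm N
  have hEm : MeasurableSet E := measurableSet_lt measurable_const hΦm
  have hΦi : Integrable Φ μ := integrable_birkhoffSumMax hf hgi N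
  have hΦfi : Integrable (fun x => Φ (f x)) μ := hf.integrable_comp_of_integrable hΦi
  have hkey : ∀ x, Φ x - Φ (f x) ≤ E.indicator g x := by
    intro x
    by_cases hx : x ∈ E
    · rw [indicator_of_mem hx]
      have := (le_max_iff.1 (birkhoffSumMax_le_max N x)).resolve_left (not_le.2 hx)
      linarith
    · have hx' : Φ x ≤ 0 := not_lt.1 hx
      rw [indicator_of_notMem hx]
      linarith [birkhoffSumMax_nonneg (f := f) (g := g) N (f x)]
  have hcomp : ∫ x, Φ (f x) ∂μ = ∫ x, Φ x ∂μ := by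
    rw [← integral_map_of_stronglyMeasurable hf.measurable hΦm.stronglyMeasurable, hf.map_eq]
  calc 0 = ∫ x, (Φ x - Φ (f x)) ∂μ := by rw [integral_sub hΦi hΦfi, hcomp, sub_self]
    _ ≤ ∫ x, E.indicator g x ∂μ := integral_mono (hΦi.sub hΦfi) (hgi.indicator hEm) hkey
    _ = ∫ x in E, g x ∂μ := integral_indicator hEm

theorem setIntegral_exists_birkhoffSum_pos_nonneg (hf : MeasurePreserving f μ μ)
    (hgm : Measurable g) (hgi : Integrable g μ) :
    0 ≤ ∫ x in {x | ∃ n, 0 < birkhoffSum f g n x}, g x ∂μ := by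
  have hunion : {x | ∃ n, 0 < birkhoffSum f g n x} = ⋃ N, {x | 0 < birkhoffSumMax f g N x} := by
    ext x
    simp only [mem_ofPred_eq, mem_iUnion, birkhoffSumMax_pos_iff]
    exact ⟨fun ⟨n, hn⟩ => ⟨n, n, le_rfl, hn⟩, fun ⟨_, n, _, hn⟩ => ⟨n, hn⟩⟩
  have hmono : Monotone fun N => {x | 0 < birkhoffSumMax f g N x} := by
    intro M N hMN x hx
    obtain ⟨k, hk, hpos⟩ := birkhoffSumMax_pos_iff.1 hx
    exact birkhoffSumMax_pos_iff.2 ⟨k, hk.trans hMN, hpos⟩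
  rw [hunion]
  exact ge_of_tendsto' (tendsto_setIntegral_of_monotone
      (fun N => measurableSet_lt measurable_const (measurable_birkhoffSumMax hf.measurable hgm N))
      hmono hgi.integrableOn)
    (setIntegral_birkhoffSumMax_pos_nonneg hf hgm hgi)

theorem Ergodic.ae_bddAbove_birkhoffSum (hf : Ergodic f μ) (hgm : Measurable g)
    (hgi : Integrable g μ) (hneg : ∫ x, g x ∂μ < 0) :
    ∀ᵐ x ∂μ, BddAbove (range fun n => birkhoffSum f g n x) := by
  set s := {x | BddAbove (range fun n => birkhoffSum f g n x)}
  have hsm : MeasurableSet s :=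
    measurableSet_bddAbove_range fun n => measurable_birkhoffSum hf.measurable hgm n
  have hinv : f ⁻¹' s = s := by
    ext x
    exact bddAbove_range_birkhoffSum_apply_iff
  refine (hf.toPreErgodic.ae_mem_or_ae_notMem hsm hinv).resolve_right fun hunb => ?_
  have hE : {x | ∃ n, 0 < birkhoffSum f g n x} =ᵐ[μ] univ := by
    refine eventuallyEq_univ.2 (hunb.mono fun x hx => ?_)
    obtain ⟨_, ⟨n, rfl⟩, hn⟩ := not_bddAbove_iff.1 hx 0
    exact ⟨n, hn⟩
  have := setIntegral_exists_birkhoffSum_pos_nonneg hf.toMeasurePreserving hgm hgi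
  rw [setIntegral_congr_set hE, setIntegral_univ] at this
  linarith

theorem Ergodic.ae_eventually_birkhoffSum_le [IsProbabilityMeasure μ] (hf : Ergodic f μ)
    (hgm : Measurable g) (hgi : Integrable g μ) {c : ℝ} (hc : ∫ x, g x ∂μ < c) :
    ∀ᵐ x ∂μ, ∀ᶠ n in atTop, birkhoffSum f g n x ≤ c * n := by
  obtain ⟨b, hgb, hbc⟩ := exists_between hc
  have hneg : ∫ x, (g x - b) ∂μ < 0 := by
    rw [integral_sub hgi (integrable_const b), integral_const, probReal_univ, one_smul]
    linarith
  filter_upwards [hf.ae_bddAbove_birkhoffSum (hgm.sub_const b) (hgi.sub (integrable_const b)) hneg]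
    with x ⟨C, hC⟩
  obtain ⟨N, hN⟩ := exists_nat_ge (C / (c - b))
  filter_upwards [eventually_ge_atTop N] with n hn
  have hsum : birkhoffSum f (fun x => g x - b) n x = birkhoffSum f g n x - n * b := by
    simp [birkhoffSum, Finset.sum_sub_distrib]
  have hCn : C ≤ (c - b) * n :=
    (div_le_iff₀' (sub_pos.2 hbc)).1 (hN.trans (by exact_mod_cast hn))
  linarith [hsum ▸ hC (mem_range_self n)]

end MaximalErgodic

lemma limsup_average_le_of_le_birkhoffSum {Ω : Type*} {f : Ω → Ω} {g : Ω → ℝ} {u : ℕ → ℝ} {x : Ω}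
    {a b : ℝ} (hu0 : ∀ j, 0 ≤ u j) (hb : 0 ≤ b) (hu : ∀ j, u j ≤ b * g (f^[j] x))
    (hg : ∀ᶠ n in atTop, birkhoffSum f g n x ≤ a * n) :
    limsup (fun n : ℕ => (1 / n : ℝ) * ∑ j ∈ Finset.range n, u j) atTop ≤ b * a := by
  refine limsup_le_of_le (isCoboundedUnder_le_of_le atTop fun n =>
    mul_nonneg (by positivity) (Finset.sum_nonneg fun j _ => hu0 j)) ?_
  filter_upwards [hg, eventually_gt_atTop 0] with n hn hn0
  calc (1 / n : ℝ) * ∑ j ∈ Finset.range n, u j ≤ (1 / n : ℝ) * (b * birkhoffSum f g n x) := by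
        gcongr
        rw [birkhoffSum, Finset.mul_sum]
        exact Finset.sum_le_sum fun j _ => hu j
    _ ≤ (1 / n : ℝ) * (b * (a * n)) := by gcongr
    _ = b * a := by field_simp

lemma ite_sq_le_of_le_mul {x y c R : ℝ} (hc : 0 < c) (hx : 0 ≤ x) (hxy : x ≤ c * y) :
    (if c * R ≤ x then x ^ 2 else 0) ≤ c ^ 2 * (if R ≤ y then y ^ 2 else 0) := by
  split_ifs with hRx hRy
  · calc x ^ 2 ≤ (c * y) ^ 2 := by gcongr
      _ = c ^ 2 * y ^ 2 := by ring
  · exact absurd (le_of_mul_le_mul_left (hRx.trans hxy) hc) hRy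
  · positivity
  · simp

theorem MeasureTheory.Integrable.exists_setIntegral_setOf_le_lt {Ω : Type*} [MeasurableSpace Ω]
    {μ : Measure Ω} {f φ : Ω → ℝ} (hf : Integrable f μ) (hφ : Measurable φ) {c : ℝ} (hc : 0 < c) :
    ∃ R : ℕ, ∫ x in {x | (R : ℝ) ≤ φ x}, f x ∂μ < c := by
  have hanti : Antitone fun R : ℕ => {x | (R : ℝ) ≤ φ x} := by
    intro R R' h x (hx : (R' : ℝ) ≤ φ x)
    exact (Nat.cast_le.2 h).trans hx
  have hempty : ⋂ R : ℕ, {x | (R : ℝ) ≤ φ x} = ∅ := by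
    ext x
    simpa using exists_nat_gt (φ x)
  have h := tendsto_setIntegral_of_antitone (fun R => measurableSet_le measurable_const hφ) hanti
    ⟨0, hf.integrableOn⟩
  rw [hempty, Measure.restrict_empty, integral_zero_measure] at h
  exact (h.eventually (gt_mem_nhds hc)).exists

theorem stmt_16_general {Ω : Type*} [MeasurableSpace Ω] (η : Measure Ω) [IsProbabilityMeasure η]
    (S : Ω → Ω) (hErg : Ergodic S η)
    (V : ℕ → Ω → Matrix (Fin 2) (Fin 2) ℂ) (hVmeas : ∀ n, Measurable (V n))
    (hVdet : ∀ n ω, (V n ω).det = 1)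
    (hVnorm : ∀ n ω, ‖V n ω‖ = ‖V 0 (S^[n] ω)‖)
    (hVL2 : (∫⁻ ω, ENNReal.ofReal (‖V 0 ω‖ ^ 2) ∂η) < ⊤) :
    ∀ L : ℝ, ∀ ε : ℝ, 0 < ε → ∃ K : ℝ,
      ∀ᵐ ω ∂η, ‖V 0 ω‖ < L →
        ∀ C : Matrix (Fin 2) (Fin 2) ℂ, ‖C‖ < L →
          Filter.limsup
            (fun n : ℕ => (1 / n : ℝ) *
              ∑ j ∈ Finset.range n,
                (if K ≤ ‖V j ω * (V 0 ω)⁻¹ * C‖ then ‖V j ω * (V 0 ω)⁻¹ * C‖ ^ 2 else 0))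
            atTop ≤ ε := by
  intro L ε hε
  rcases le_or_gt L 0 with hL | hL
  · exact ⟨0, ae_of_all _ fun ω hω => absurd hω (not_lt.2 (hL.trans (norm_nonneg _)))⟩
  set c : ℝ := 3 * L ^ 2
  have hc : 0 < c := by positivity
  set f : Ω → ℝ := fun ω => ‖V 0 ω‖ ^ 2
  have hfm : Measurable f := (hVmeas 0).norm.pow_const 2
  have hfi : Integrable f η := ⟨hfm.aestronglyMeasurable,
    (hasFiniteIntegral_iff_ofReal (ae_of_all _ fun ω => sq_nonneg _)).2 hVL2⟩
  obtain ⟨R, hR⟩ := hfi.exists_setIntegral_setOf_le_lt (hVmeas 0).norm (div_pos hε (pow_pos hc 2))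
  set s := {ω | (R : ℝ) ≤ ‖V 0 ω‖}
  have hsm : MeasurableSet s := measurableSet_le measurable_const (hVmeas 0).norm
  refine ⟨c * R, ?_⟩
  filter_upwards [hErg.ae_eventually_birkhoffSum_le (hfm.indicator hsm) (hfi.indicator hsm)
    (by rwa [integral_indicator hsm])] with ω hω hωL C hC
  have hbound (j : ℕ) : ‖V j ω * (V 0 ω)⁻¹ * C‖ ≤ c * ‖V 0 (S^[j] ω)‖ :=
    calc ‖V j ω * (V 0 ω)⁻¹ * C‖ ≤ 3 * ‖V j ω‖ * ‖V 0 ω‖ * ‖C‖ :=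
          Matrix.l2_opNorm_mul_inv_mul_le _ (hVdet 0 ω) _
      _ ≤ 3 * ‖V j ω‖ * L * L := by gcongr
      _ = c * ‖V 0 (S^[j] ω)‖ := by rw [hVnorm]; ring
  have hterm (j : ℕ) :
      (if c * R ≤ ‖V j ω * (V 0 ω)⁻¹ * C‖ then ‖V j ω * (V 0 ω)⁻¹ * C‖ ^ 2 else 0)
        ≤ c ^ 2 * s.indicator f (S^[j] ω) := by
    simpa [s, f, indicator_apply] using ite_sq_le_of_le_mul (R := R) hc (norm_nonneg _) (hbound j)
  simpa only [mul_div_cancel₀ _ (pow_pos hc 2).ne'] using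
    limsup_average_le_of_le_birkhoffSum (fun j => by split_ifs <;> positivity) (sq_nonneg c)
      hterm hω

/-- **Lemma 5.5** of Avila–Last–Simon, abstract form.  In the setting of Lemma 5.3 (probability
space `(Ω, η)`, `S` measure preserving and ergodic, `V_n : Ω → M₂(ℂ)` measurable with
`det V_n = 1`, `‖V_n(ω)‖ = ‖V_0(S^n ω)‖`, `∫ ‖V_0‖² dη < ∞`, `T_n(ω) = V_n(ω) V_0(ω)⁻¹`):
for every `L < ∞` and `ε > 0` there is `K < ∞` such that for a.e. `ω` with `‖V_0(ω)‖ < L` and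
every `2 × 2` complex matrix `C` with `‖C‖ < L`,
`limsup_n (1/n) Σ_{0 ≤ j ≤ n-1, ‖T_j(ω)C‖ ≥ K} ‖T_j(ω)C‖² ≤ ε`. -/
theorem stmt_16 {Ω : Type*} [MeasurableSpace Ω] (η : Measure Ω) [IsProbabilityMeasure η]
    (S : Ω → Ω) (hS : MeasurePreserving S η η) (hErg : Ergodic S η)
    (V : ℕ → Ω → Matrix (Fin 2) (Fin 2) ℂ) (hVmeas : ∀ n, Measurable (V n))
    (hVdet : ∀ n ω, (V n ω).det = 1)
    (hVnorm : ∀ n ω, ‖V n ω‖ = ‖V 0 (S^[n] ω)‖)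
    (hVL2 : (∫⁻ ω, ENNReal.ofReal (‖V 0 ω‖ ^ 2) ∂η) < ⊤) :
    ∀ L : ℝ, ∀ ε : ℝ, 0 < ε → ∃ K : ℝ,
      ∀ᵐ ω ∂η, ‖V 0 ω‖ < L →
        ∀ C : Matrix (Fin 2) (Fin 2) ℂ, ‖C‖ < L →
          Filter.limsup
            (fun n : ℕ => (1 / n : ℝ) *
              ∑ j ∈ Finset.range n,
                (if K ≤ ‖V j ω * (V 0 ω)⁻¹ * C‖ then ‖V j ω * (V 0 ω)⁻¹ * C‖ ^ 2 else 0))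
            atTop ≤ ε :=
  stmt_16_general η S hErg V hVmeas hVdet hVnorm hVL2
end

section
/- (Variation of parameters identity (7.7)) For every n ≥ 0 and all x, x₀ ∈ ℝ, p_n(x) − p_n(x₀) = (x − x₀) · Σ_{m=0}^{n−1} ( p_n(x₀) q_m(x₀) − p_m(x₀) q_n(x₀) ) p_m(x). -/
open Polynomial Finset

/-!
The sequences `n ↦ p_n(x)` and `v_m := p_n(x₀) q_m(x₀) - p_m(x₀) q_n(x₀)` solve the Jacobi recurrence
at the spectral parameters `x` and `x₀` respectively. Summing the recurrences against each other
(discrete Green's identity) expresses `(x₀ - x) Σ_{m<n} v_m p_m(x)` through the boundary Wronskians at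
`0` and `n`. Since `v_n = 0` and `v_{-1} = p_n(x₀)`, and since `a_n v_{n-1}` is the Wronskian of `p`
and `q` at `x₀`, which is constant and equal to `1`, the boundary terms are `p_n(x₀) - p_n(x)`.
-/

section Jacobi

variable {R : Type*} [CommRing R]

def IsJacobiSolution (a b : ℕ → R) (x : R) (u : ℤ → R) : Prop :=
  ∀ n : ℕ, x * u n = a (n + 1) * u (n + 1) + b (n + 1) * u n + a n * u (n - 1)

def jacobiWronskian (a : ℕ → R) (u v : ℤ → R) (n : ℕ) : R :=
  a n * (u n * v (n - 1) - u (n - 1) * v n)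

variable {a b : ℕ → R} {x y : R} {u v : ℤ → R}

theorem IsJacobiSolution.eval {p : ℤ → R[X]}
    (hp : IsJacobiSolution (fun n => C (a n)) (fun n => C (b n)) X p) (t : R) :
    IsJacobiSolution a b t (fun n => (p n).eval t) :=
  fun n => by simpa using congrArg (Polynomial.eval t) (hp n)

theorem IsJacobiSolution.sub_mul_sum_mul (hu : IsJacobiSolution a b x u)
    (hv : IsJacobiSolution a b y v) (n : ℕ) :
    (x - y) * ∑ m ∈ range n, u m * v m =
      jacobiWronskian a u v n - jacobiWronskian a u v 0 := by
  rw [mul_sum, ← sum_range_sub]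
  refine sum_congr rfl fun m _ => ?_
  simp only [jacobiWronskian, Nat.cast_succ, add_sub_cancel_right]
  linear_combination v m * hu m - u m * hv m

theorem IsJacobiSolution.jacobiWronskian_eq (hu : IsJacobiSolution a b x u)
    (hv : IsJacobiSolution a b x v) (n : ℕ) :
    jacobiWronskian a u v n = jacobiWronskian a u v 0 := by
  have h := hu.sub_mul_sum_mul hv n
  rwa [sub_self, zero_mul, eq_comm, sub_eq_zero] at h

end Jacobi

theorem stmt_18_general (a b : ℕ → ℝ) (ha0 : a 0 = 1)
    (p q : ℤ → Polynomial ℝ)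
    (hpm1 : p (-1) = 0) (hp0 : p 0 = 1) (hqm1 : q (-1) = 1) (hq0 : q 0 = 0)
    (hprec : ∀ n : ℕ, X * p (n : ℤ) =
      C (a (n + 1)) * p ((n : ℤ) + 1) + C (b (n + 1)) * p (n : ℤ) + C (a n) * p ((n : ℤ) - 1))
    (hqrec : ∀ n : ℕ, X * q (n : ℤ) =
      C (a (n + 1)) * q ((n : ℤ) + 1) + C (b (n + 1)) * q (n : ℤ) + C (a n) * q ((n : ℤ) - 1)) :
    ∀ (n : ℕ) (x x₀ : ℝ),
      (p (n : ℤ)).eval x - (p (n : ℤ)).eval x₀ =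
        (x - x₀) * ∑ m ∈ Finset.range n,
          ((p (n : ℤ)).eval x₀ * (q (m : ℤ)).eval x₀
            - (p (m : ℤ)).eval x₀ * (q (n : ℤ)).eval x₀) * (p (m : ℤ)).eval x := by
  intro n x x₀
  have hp : ∀ t, IsJacobiSolution a b t (fun m => (p m).eval t) := IsJacobiSolution.eval hprec
  have hq : ∀ t, IsJacobiSolution a b t (fun m => (q m).eval t) := IsJacobiSolution.eval hqrec
  have hv : IsJacobiSolution a b x₀
      (fun m => (p n).eval x₀ * (q m).eval x₀ - (p m).eval x₀ * (q n).eval x₀) :=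
    fun m => by linear_combination (p n).eval x₀ * hq x₀ m - (q n).eval x₀ * hp x₀ m
  have hW : jacobiWronskian a (fun m => (p m).eval x₀) (fun m => (q m).eval x₀) n = 1 := by
    rw [(hp x₀).jacobiWronskian_eq (hq x₀)]
    simp [jacobiWronskian, ha0, hp0, hq0, hpm1, hqm1]
  have hgreen := hv.sub_mul_sum_mul (hp x) n
  simp only [jacobiWronskian, Nat.cast_zero, zero_sub, ha0, hp0, hpm1, hqm1, eval_one,
    eval_zero] at hgreen hW
  linear_combination hgreen - (p n).eval x * hW

/-- **Variation of parameters identity (7.7)** of Avila–Last–Simon.  Given Jacobi parameters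
`(a_n)_{n ≥ 1}` (with the convention `a_0 = 1`) and `(b_n)_{n ≥ 1}`, and the first- and
second-kind orthogonal polynomials `p` and `q` determined by the common three-term recurrence
`x u_n = a_{n+1} u_{n+1} + b_{n+1} u_n + a_n u_{n-1}` with `p_{-1} = 0, p_0 = 1` and
`q_{-1} = 1, q_0 = 0`, one has
`p_n(x) - p_n(x₀) = (x - x₀) Σ_{m=0}^{n-1} (p_n(x₀) q_m(x₀) - p_m(x₀) q_n(x₀)) p_m(x)`. -/
theorem stmt_18 (a b : ℕ → ℝ) (ha0 : a 0 = 1) (hapos : ∀ n : ℕ, 0 < a (n + 1))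
    (p q : ℤ → Polynomial ℝ)
    (hpm1 : p (-1) = 0) (hp0 : p 0 = 1) (hqm1 : q (-1) = 1) (hq0 : q 0 = 0)
    (hprec : ∀ n : ℕ, X * p (n : ℤ) =
      C (a (n + 1)) * p ((n : ℤ) + 1) + C (b (n + 1)) * p (n : ℤ) + C (a n) * p ((n : ℤ) - 1))
    (hqrec : ∀ n : ℕ, X * q (n : ℤ) =
      C (a (n + 1)) * q ((n : ℤ) + 1) + C (b (n + 1)) * q (n : ℤ) + C (a n) * q ((n : ℤ) - 1)) :
    ∀ (n : ℕ) (x x₀ : ℝ),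
      (p (n : ℤ)).eval x - (p (n : ℤ)).eval x₀ =
        (x - x₀) * ∑ m ∈ Finset.range n,
          ((p (n : ℤ)).eval x₀ * (q (m : ℤ)).eval x₀
            - (p (m : ℤ)).eval x₀ * (q (n : ℤ)).eval x₀) * (p (m : ℤ)).eval x :=
  stmt_18_general a b ha0 p q hpm1 hp0 hqm1 hq0 hprec hqrec
end

section
/- (Derivative formula (7.8)) For every n ≥ 0 and every x₀ ∈ ℝ, the derivative of p_n satisfies p_n′(x₀) = Σ_{m=0}^{n−1} ( p_n(x₀) q_m(x₀) − p_m(x₀) q_n(x₀) ) p_m(x₀). -/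
/-!
Differentiating the recurrence `X p_n = a_{n+1} p_{n+1} + b_{n+1} p_n + a_n p_{n-1}` shows that
`p_n′` solves the same recurrence with source term `p_n`, and vanishes at `n = -1, 0`.
Since `p` and `q` are solutions of the homogeneous recurrence with Wronskian
`a_n (p_n q_{n-1} - p_{n-1} q_n) = 1`, variation of parameters produces the solution
`Σ_{m<n} (p_n q_m - p_m q_n) f_m` of the recurrence with source `f` and the same zero data.
Two solutions with the same data at `-1, 0` coincide, because every `a_{n+1}` is nonzero.
-/

open Polynomial Finset

variable {R : Type*} [CommRing R]

def SolvesJacobiRec (a b : ℕ → R) (f u : ℤ → R[X]) : Prop :=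
  ∀ n : ℕ, X * u n + f n = C (a (n + 1)) * u (n + 1) + C (b (n + 1)) * u n + C (a n) * u (n - 1)

-- For `n < 0` the sum is empty (`Int.toNat`), which supplies the zero datum at `n = -1`.
noncomputable def variationOfParameters (p q f : ℤ → R[X]) (n : ℤ) : R[X] :=
  ∑ m ∈ range n.toNat, (p n * q m - p m * q n) * f m

namespace SolvesJacobiRec

variable {a b : ℕ → R} {f p q u v : ℤ → R[X]}

theorem derivative (hu : SolvesJacobiRec a b 0 u) :
    SolvesJacobiRec a b u (fun n => derivative (u n)) := by
  intro n
  have h := congrArg Polynomial.derivative (hu n)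
  simp only [Pi.zero_apply, add_zero, derivative_mul, derivative_X, derivative_C, one_mul,
    zero_mul, zero_add, derivative_add] at h
  linear_combination h

theorem wronskian_eq (hp : SolvesJacobiRec a b 0 p) (hq : SolvesJacobiRec a b 0 q) (n : ℕ) :
    C (a n) * (p n * q (n - 1) - p (n - 1) * q n) = C (a 0) * (p 0 * q (-1) - p (-1) * q 0) := by
  induction n with
  | zero => simp
  | succ n ih =>
    have hpn := hp n
    have hqn := hq n
    simp only [Pi.zero_apply, add_zero] at hpn hqn
    push_cast
    rw [add_sub_cancel_right]
    linear_combination ih - q n * hpn + p n * hqn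

theorem eq_of_eq_neg_one_of_eq_zero [IsDomain R] (ha : ∀ n, a (n + 1) ≠ 0)
    (hu : SolvesJacobiRec a b f u) (hv : SolvesJacobiRec a b f v)
    (hm1 : u (-1) = v (-1)) (h0 : u 0 = v 0) (n : ℕ) : u n = v n := by
  suffices ∀ n : ℕ, u (n - 1) = v (n - 1) ∧ u n = v n from (this n).2
  intro n
  induction n with
  | zero => exact ⟨hm1, h0⟩
  | succ n ih =>
    push_cast
    rw [add_sub_cancel_right]
    refine ⟨ih.2, mul_left_cancel₀ (C_ne_zero.mpr (ha n)) ?_⟩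
    linear_combination hv n - hu n + (X - C (b (n + 1))) * ih.2 - C (a n) * ih.1

end SolvesJacobiRec

theorem solvesJacobiRec_variationOfParameters {a b : ℕ → R} {f p q : ℤ → R[X]}
    (hp : SolvesJacobiRec a b 0 p) (hq : SolvesJacobiRec a b 0 q)
    (hW : ∀ n : ℕ, C (a n) * (p n * q (n - 1) - p (n - 1) * q n) = 1) :
    SolvesJacobiRec a b f (variationOfParameters p q f) := by
  intro n
  set K : ℤ → ℤ → R[X] := fun k m => p k * q m - p m * q k
  have hK (m : ℤ) : C (a (n + 1)) * K (n + 1) m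
      = (X - C (b (n + 1))) * K n m - C (a n) * K (n - 1) m := by
    have hpn := hp n
    have hqn := hq n
    simp only [Pi.zero_apply, add_zero] at hpn hqn
    linear_combination -q m * hpn + p m * hqn
  have hsum_n : ∑ m ∈ range (n + 1), K n m * f m = variationOfParameters p q f n := by
    simp [variationOfParameters, sum_range_succ, K]
  have hsum_pred : ∑ m ∈ range n, K (n - 1) m * f m = variationOfParameters p q f (n - 1) := by
    cases n with
    | zero => simp [variationOfParameters]
    | succ k => simp [variationOfParameters, sum_range_succ, K]
  have hsucc : variationOfParameters p q f (n + 1) = ∑ m ∈ range (n + 1), K (n + 1) m * f m := by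
    rw [variationOfParameters, ← Nat.cast_succ, Int.toNat_natCast, Nat.cast_succ]
  have hcross : C (a n) * K (n - 1) n = -1 := by
    linear_combination -hW n
  have hmain : C (a (n + 1)) * variationOfParameters p q f (n + 1) =
      (X - C (b (n + 1))) * variationOfParameters p q f n -
        C (a n) * (variationOfParameters p q f (n - 1) + K (n - 1) n * f n) :=
    calc C (a (n + 1)) * variationOfParameters p q f (n + 1)
        = ∑ m ∈ range (n + 1), C (a (n + 1)) * K (n + 1) m * f m := by
          simp only [hsucc, mul_sum, mul_assoc]
      _ = ∑ m ∈ range (n + 1),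
            ((X - C (b (n + 1))) * (K n m * f m) - C (a n) * (K (n - 1) m * f m)) :=
          sum_congr rfl fun m _ => by rw [hK]; ring
      _ = _ := by
          rw [sum_sub_distrib, ← mul_sum, ← mul_sum, hsum_n, sum_range_succ, hsum_pred]
  linear_combination -hmain + f n * hcross

/-- **Derivative formula (7.8)** of Avila–Last–Simon.  With `p` and `q` the first- and
second-kind orthogonal polynomials for Jacobi parameters `(a_n, b_n)` (convention `a_0 = 1`),
`p_n′(x₀) = Σ_{m=0}^{n-1} (p_n(x₀) q_m(x₀) - p_m(x₀) q_n(x₀)) p_m(x₀)`. -/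
theorem stmt_19 (a b : ℕ → ℝ) (ha0 : a 0 = 1) (hapos : ∀ n : ℕ, 0 < a (n + 1))
    (p q : ℤ → Polynomial ℝ)
    (hpm1 : p (-1) = 0) (hp0 : p 0 = 1) (hqm1 : q (-1) = 1) (hq0 : q 0 = 0)
    (hprec : ∀ n : ℕ, X * p (n : ℤ) =
      C (a (n + 1)) * p ((n : ℤ) + 1) + C (b (n + 1)) * p (n : ℤ) + C (a n) * p ((n : ℤ) - 1))
    (hqrec : ∀ n : ℕ, X * q (n : ℤ) =
      C (a (n + 1)) * q ((n : ℤ) + 1) + C (b (n + 1)) * q (n : ℤ) + C (a n) * q ((n : ℤ) - 1)) :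
    ∀ (n : ℕ) (x₀ : ℝ),
      (derivative (p (n : ℤ))).eval x₀ =
        ∑ m ∈ Finset.range n,
          ((p (n : ℤ)).eval x₀ * (q (m : ℤ)).eval x₀
            - (p (m : ℤ)).eval x₀ * (q (n : ℤ)).eval x₀) * (p (m : ℤ)).eval x₀ := by
  have hp : SolvesJacobiRec a b 0 p := fun n => by simpa using hprec n
  have hq : SolvesJacobiRec a b 0 q := fun n => by simpa using hqrec n
  have hW (n : ℕ) : C (a n) * (p n * q (n - 1) - p (n - 1) * q n) = 1 := by
    simp [hp.wronskian_eq hq n, ha0, hpm1, hp0, hqm1, hq0]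
  have hderiv (n : ℕ) : derivative (p n) = variationOfParameters p q p n :=
    hp.derivative.eq_of_eq_neg_one_of_eq_zero (fun n => (hapos n).ne')
      (solvesJacobiRec_variationOfParameters hp hq hW)
      (by simp [hpm1, variationOfParameters]) (by simp [hp0, variationOfParameters]) n
  intro n x₀
  simp [hderiv, variationOfParameters, eval_finsetSum]
end
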